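/- arXiv:1703.07665 — 7 statements merged into one kernel-verified Lean document; each statement's English description precedes it below -/
import Mathlib

section
/- Let α > 0 and μ > μ_P(α) = (2/α)√(1+α), and let θ_1 = arctan(½(μα − √(μ²α² − 4(1+α)))), φ_1⁺ = √(1/sin θ_1). Consider the planar vector field V(θ,φ) = (p_+(θ)·φ, −c_+(θ)·b(θ,φ)) with p_+(θ) = 1 + α cos²θ − μα sin θ cos θ, b(θ,φ) = −1 + φ² sin θ, c_+(θ) = −α(cos θ − μ sin θ). Then (θ_1, φ_1⁺) is a zero of V, the derivative (Jacobian matrix) of V at (θ_1, φ_1⁺) equals the lower-triangular matrix with diagonal entries λ_1 = p_+'(θ_1)·φ_1⁺ and λ_2 = −2 tan(θ_1)·φ_1⁺ and lower-left entry −(φ_1⁺)², and both eigenvalues λ_1 and λ_2 are strictly negative (so the point is a stable node). -/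
/-!
With `t = tan θ`, the factorisation `p₊(θ) = cos²θ · q(t)`, `q(t) = t² − μα t + (1 + α)` (`tanPoly`), shows that
the zeros of `p₊` with `cos θ ≠ 0` are the angles whose tangent is a root of `q`; `θ₁` is the one
for the smaller root `t₁ = (μα − √Δ)/2`, which is positive. At such a zero, differentiating the
factorisation gives `p₊'(θ₁) = q'(t₁) = 2t₁ − μα = −√Δ < 0`, and `c₊(θ) cos θ = 1 − p₊(θ)` gives
`c₊(θ₁) = 1 / cos θ₁`, which turns the second row of the Jacobian into `(−φ², −2 tan θ₁ φ)`.
-/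

open Real

namespace PainleveP

variable (α μ : ℝ)

noncomputable def pplus (θ : ℝ) : ℝ := 1 + α * cos θ ^ 2 - μ * α * sin θ * cos θ

noncomputable def cplus (θ : ℝ) : ℝ := -α * (cos θ - μ * sin θ)

noncomputable def b (θ φ : ℝ) : ℝ := -1 + φ ^ 2 * sin θ

noncomputable def vectorField (p : ℝ × ℝ) : ℝ × ℝ :=
  (pplus α μ p.1 * p.2, -(cplus α μ p.1 * b p.1 p.2))

noncomputable def tanPoly (s : ℝ) : ℝ := s ^ 2 - μ * α * s + (1 + α)

lemma pplus_eq_cos_sq_mul_tanPoly {θ : ℝ} (hθ : cos θ ≠ 0) :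
    pplus α μ θ = cos θ ^ 2 * tanPoly α μ (tan θ) := by
  rw [pplus, tanPoly, tan_eq_sin_div_cos]
  field_simp
  linear_combination -sin_sq_add_cos_sq θ

lemma hasDerivAt_pplus (θ : ℝ) :
    HasDerivAt (pplus α μ)
      (-2 * α * sin θ * cos θ - μ * α * (cos θ ^ 2 - sin θ ^ 2)) θ := by
  have h := ((((hasDerivAt_cos θ).pow 2).const_mul α).const_add 1).sub
    (((hasDerivAt_sin θ).const_mul (μ * α)).mul (hasDerivAt_cos θ))
  exact h.congr_deriv (by push_cast; ring)

lemma deriv_pplus_eq {θ : ℝ} (hθ : cos θ ≠ 0) :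
    deriv (pplus α μ) θ =
      2 * tan θ - μ * α - 2 * sin θ * cos θ * tanPoly α μ (tan θ) := by
  rw [(hasDerivAt_pplus α μ θ).deriv, tanPoly, tan_eq_sin_div_cos]
  field_simp
  linear_combination (2 * sin θ - μ * α * cos θ) * sin_sq_add_cos_sq θ

lemma cplus_mul_cos (θ : ℝ) : cplus α μ θ * cos θ = 1 - pplus α μ θ := by
  rw [cplus, pplus]; ring

lemma b_sqrt_one_div_sin {θ : ℝ} (hθ : 0 < sin θ) : b θ √(1 / sin θ) = 0 := by
  rw [b, sq_sqrt (by positivity)]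
  field_simp
  ring

lemma differentiable_pplus : Differentiable ℝ (pplus α μ) := by
  unfold pplus; fun_prop

lemma differentiable_cplus : Differentiable ℝ (cplus α μ) := by
  unfold cplus; fun_prop

lemma fderiv_vectorField_apply (θ φ : ℝ) :
    DifferentiableAt ℝ (vectorField α μ) (θ, φ) ∧
    ∀ x y : ℝ, fderiv ℝ (vectorField α μ) (θ, φ) (x, y) =
      (deriv (pplus α μ) θ * φ * x + pplus α μ θ * y,
        -(deriv (cplus α μ) θ * x * b θ φ +
          cplus α μ θ * (φ ^ 2 * cos θ * x + 2 * φ * sin θ * y))) := by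
  have hfst := hasFDerivAt_fst (𝕜 := ℝ) (E := ℝ) (F := ℝ) (p := (θ, φ))
  have hsnd := hasFDerivAt_snd (𝕜 := ℝ) (E := ℝ) (F := ℝ) (p := (θ, φ))
  have hP := ((differentiable_pplus α μ θ).hasDerivAt.comp_hasFDerivAt _ hfst).mul hsnd
  have hC := (differentiable_cplus α μ θ).hasDerivAt.comp_hasFDerivAt _ hfst
  have hB := (((hasDerivAt_pow 2 φ).comp_hasFDerivAt _ hsnd).mul
    ((hasDerivAt_sin θ).comp_hasFDerivAt _ hfst)).const_add (-1)
  have hV : HasFDerivAt (vectorField α μ) _ (θ, φ) := hP.prodMk (hC.mul hB).neg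
  refine ⟨hV.differentiableAt, fun x y => ?_⟩
  rw [hV.fderiv]
  simp only [Function.comp_apply, Nat.cast_ofNat, Nat.add_one_sub_one, pow_one, smul_add,
    Pi.mul_apply, neg_add_rev, ContinuousLinearMap.prod_apply, add_apply,
    smul_apply, ContinuousLinearMap.coe_snd', smul_eq_mul,
    ContinuousLinearMap.coe_fst', neg_apply, b, Prod.mk.injEq]
  constructor <;> ring

lemma fderiv_vectorField_apply_of_tanPoly_eq_zero {θ φ : ℝ} (hcos : cos θ ≠ 0)
    (hq : tanPoly α μ (tan θ) = 0) (hb : b θ φ = 0) :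
    vectorField α μ (θ, φ) = (0, 0) ∧
    DifferentiableAt ℝ (vectorField α μ) (θ, φ) ∧
    ∀ x y : ℝ, fderiv ℝ (vectorField α μ) (θ, φ) (x, y) =
      (deriv (pplus α μ) θ * φ * x, -φ ^ 2 * x + -2 * tan θ * φ * y) := by
  have hp : pplus α μ θ = 0 := by rw [pplus_eq_cos_sq_mul_tanPoly α μ hcos, hq, mul_zero]
  have hc : cplus α μ θ * cos θ = 1 := by rw [cplus_mul_cos, hp, sub_zero]
  obtain ⟨hdiff, hjac⟩ := fderiv_vectorField_apply α μ θ φ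
  refine ⟨by simp [vectorField, hp, hb], hdiff, fun x y => ?_⟩
  rw [hjac, hp, hb, tan_eq_sin_div_cos, Prod.mk.injEq]
  constructor
  · ring
  · field_simp
    linear_combination (-(φ ^ 2 * x * cos θ) - 2 * φ * sin θ * y) * hc

lemma tanPoly_smaller_root (h : 4 * (1 + α) ≤ μ ^ 2 * α ^ 2) :
    tanPoly α μ ((μ * α - √(μ ^ 2 * α ^ 2 - 4 * (1 + α))) / 2) = 0 := by
  rw [tanPoly]
  linear_combination sq_sqrt (sub_nonneg.2 h) / 4

lemma smaller_root_pos (hμα : 0 < μ * α) (hα : 0 < 1 + α) :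
    0 < (μ * α - √(μ ^ 2 * α ^ 2 - 4 * (1 + α))) / 2 := by
  have hlt : μ ^ 2 * α ^ 2 - 4 * (1 + α) < (μ * α) ^ 2 := by rw [mul_pow]; linarith
  linarith [(sqrt_lt' hμα).2 hlt]

lemma four_mul_lt_sq_of_muP_lt (hα : 0 < α) (hμ : 2 / α * √(1 + α) < μ) :
    0 < μ * α ∧ 4 * (1 + α) < μ ^ 2 * α ^ 2 := by
  rw [div_mul_eq_mul_div, div_lt_iff₀ hα] at hμ
  have hroot := sqrt_nonneg (1 + α)
  refine ⟨by linarith, ?_⟩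
  rw [← mul_pow, ← sq_sqrt (by linarith : (0 : ℝ) ≤ 1 + α)]
  nlinarith

end PainleveP

open PainleveP in
/-- For `α > 0`, `μ > μ_P(α)`, the point `P = (θ₁, φ₁⁺)` is a zero of the
vector field `V(θ,φ) = (p₊(θ)φ, −c₊(θ)b(θ,φ))`, the Jacobian of `V` at `P` is the
lower-triangular matrix with diagonal `λ₁ = p₊'(θ₁)φ₁⁺`, `λ₂ = −2 tan(θ₁)φ₁⁺` and
lower-left entry `−(φ₁⁺)²`, and both eigenvalues `λ₁, λ₂` are strictly negative. -/
theorem painleve_P_stable_node (α μ : ℝ) (hα : 0 < α)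
    (hμP : 2 / α * Real.sqrt (1 + α) < μ) :
    let pplus : ℝ → ℝ := fun θ => 1 + α * Real.cos θ ^ 2 - μ * α * Real.sin θ * Real.cos θ
    let b : ℝ → ℝ → ℝ := fun θ φ => -1 + φ ^ 2 * Real.sin θ
    let cplus : ℝ → ℝ := fun θ => -α * (Real.cos θ - μ * Real.sin θ)
    let θ₁ : ℝ := Real.arctan ((μ * α - Real.sqrt (μ ^ 2 * α ^ 2 - 4 * (1 + α))) / 2)
    let φ₁ : ℝ := Real.sqrt (1 / Real.sin θ₁)
    let V : ℝ × ℝ → ℝ × ℝ := fun p => (pplus p.1 * p.2, -(cplus p.1 * b p.1 p.2))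
    let lam₁ : ℝ := deriv pplus θ₁ * φ₁
    let lam₂ : ℝ := -2 * Real.tan θ₁ * φ₁
    V (θ₁, φ₁) = (0, 0) ∧
    DifferentiableAt ℝ V (θ₁, φ₁) ∧
    (∀ x y : ℝ, fderiv ℝ V (θ₁, φ₁) (x, y) = (lam₁ * x, -φ₁ ^ 2 * x + lam₂ * y)) ∧
    lam₁ < 0 ∧ lam₂ < 0 := by
  intro _ _ _ θ₁ φ₁ _ _ _
  obtain ⟨hμα, hΔ⟩ := four_mul_lt_sq_of_muP_lt α μ hα hμP
  set t := (μ * α - √(μ ^ 2 * α ^ 2 - 4 * (1 + α))) / 2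
  have ht : 0 < t := smaller_root_pos α μ hμα (by linarith)
  have htan : tan θ₁ = t := tan_arctan t
  have hcos : 0 < cos θ₁ := cos_arctan_pos t
  have hsin : 0 < sin θ₁ := by rw [← tan_mul_cos hcos.ne', htan]; positivity
  have hq : tanPoly α μ (tan θ₁) = 0 := htan ▸ tanPoly_smaller_root α μ hΔ.le
  have hφ : 0 < φ₁ := sqrt_pos.2 (by positivity)
  have hderiv : deriv (pplus α μ) θ₁ = -√(μ ^ 2 * α ^ 2 - 4 * (1 + α)) := by
    rw [deriv_pplus_eq α μ hcos.ne', hq, htan]; ring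
  obtain ⟨hV, hdiff, hjac⟩ := fderiv_vectorField_apply_of_tanPoly_eq_zero α μ hcos.ne' hq
    (b_sqrt_one_div_sin hsin)
  refine ⟨hV, hdiff, hjac, ?_, ?_⟩
  · show deriv (pplus α μ) θ₁ * φ₁ < 0
    rw [hderiv]
    exact mul_neg_of_neg_of_pos (neg_neg_of_pos (sqrt_pos.2 (by linarith))) hφ
  · show -2 * tan θ₁ * φ₁ < 0
    rw [htan]
    linarith [mul_pos ht hφ]
end

section
/- Let α > 0 and μ > μ_P(α) = (2/α)√(1+α). With θ_1 = arctan(½(μα − √(μ²α² − 4(1+α)))), φ_1⁺ = √(1/sin θ_1), λ_1 = p_+'(θ_1)·φ_1⁺ and λ_2 = −2 tan(θ_1)·φ_1⁺ (where p_+(θ) = 1 + α cos²θ − μα sin θ cos θ), the ratio ξ = λ_2/λ_1 satisfies ξ < 1 if and only if μ > μ_C(α) = (4/α)√((α+1)/3). -/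
/-!
Write `t = tan θ₁`: it is the smaller root of `t² − μα t + (1 + α)`. Using this root equation the
derivative simplifies to `p₊'(θ₁) = −(1 + α − t²) / t`, so `ξ = 2t² / (1 + α − t²)` and
`ξ < 1` means `3t² < 1 + α`, i.e. `t < q := √((1 + α)/3)`. Since `q` lies below the larger
root, this happens exactly when the quadratic is negative at `q`, where it equals
`q (4q − μα)`.
-/

open Real

/-- The smaller root of `x² − b x + c`. -/
noncomputable def smallerRoot (b c : ℝ) : ℝ := (b - √(b ^ 2 - 4 * c)) / 2

section SmallerRoot

variable {b c : ℝ}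

theorem smallerRoot_lt_iff {q : ℝ} (hq : 2 * q ≤ b) :
    smallerRoot b c < q ↔ q ^ 2 - b * q + c < 0 := by
  calc smallerRoot b c < q ↔ b - 2 * q < √(b ^ 2 - 4 * c) := by
        unfold smallerRoot; constructor <;> intro h <;> linarith
    _ ↔ (b - 2 * q) ^ 2 < b ^ 2 - 4 * c := Real.lt_sqrt (by linarith)
    _ ↔ q ^ 2 - b * q + c < 0 := by constructor <;> intro h <;> nlinarith

theorem smallerRoot_isRoot (hD : 0 ≤ b ^ 2 - 4 * c) :
    smallerRoot b c ^ 2 - b * smallerRoot b c + c = 0 := by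
  unfold smallerRoot
  linear_combination (1 / 4 : ℝ) * Real.sq_sqrt hD

variable (hc : 0 < c) (hb : 2 * √c < b)
include hc hb

theorem discrim_pos_of_two_sqrt_lt : 0 < b ^ 2 - 4 * c := by
  have hsq := Real.sq_sqrt hc.le
  nlinarith [Real.sqrt_nonneg c]

theorem smallerRoot_pos : 0 < smallerRoot b c := by
  have hb0 : 0 < b := by linarith [Real.sqrt_nonneg c]
  have : √(b ^ 2 - 4 * c) < b := (Real.sqrt_lt' hb0).2 (by linarith)
  unfold smallerRoot; linarith

theorem smallerRoot_sq_lt : smallerRoot b c ^ 2 < c := by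
  have hq : smallerRoot b c < √c := by
    rw [smallerRoot_lt_iff hb.le, Real.sq_sqrt hc.le]
    nlinarith [mul_lt_mul_of_pos_left hb (Real.sqrt_pos.2 hc), Real.sq_sqrt hc.le]
  exact (Real.lt_sqrt (smallerRoot_pos hc hb).le).1 hq

theorem three_mul_smallerRoot_sq_lt_iff :
    3 * smallerRoot b c ^ 2 < c ↔ 4 * √(c / 3) < b := by
  set q := √(c / 3)
  have hq0 : 0 < q := Real.sqrt_pos.2 (by linarith)
  have hq2 : q ^ 2 = c / 3 := Real.sq_sqrt (by linarith)
  have hqc : q ≤ √c := Real.sqrt_le_sqrt (by linarith)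
  calc 3 * smallerRoot b c ^ 2 < c ↔ smallerRoot b c < q := by
        rw [Real.lt_sqrt (smallerRoot_pos hc hb).le]; constructor <;> intro h <;> linarith
    _ ↔ q ^ 2 - b * q + c < 0 := smallerRoot_lt_iff (by linarith)
    _ ↔ q * (4 * q - b) < 0 := by
        rw [show q ^ 2 - b * q + c = q * (4 * q - b) by linear_combination (-3) * hq2]
    _ ↔ 4 * q < b :=
      ⟨fun h => sub_neg.1 (neg_of_mul_neg_right h hq0.le),
        fun h => mul_neg_of_pos_of_neg hq0 (sub_neg.2 h)⟩

end SmallerRoot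

theorem hasDerivAt_pPlus (α μ θ : ℝ) :
    HasDerivAt (fun θ => 1 + α * cos θ ^ 2 - μ * α * sin θ * cos θ)
      (-2 * α * sin θ * cos θ - μ * α * (cos θ ^ 2 - sin θ ^ 2)) θ := by
  have h : HasDerivAt (fun θ => 1 + α * cos θ ^ 2 - μ * α * sin θ * cos θ) _ θ :=
    ((((hasDerivAt_cos θ).pow 2).const_mul α).const_add 1).sub
      (((hasDerivAt_sin θ).const_mul (μ * α)).mul (hasDerivAt_cos θ))
  convert h using 1
  ring

theorem deriv_pPlus_arctan {α μ t : ℝ} (ht : t ≠ 0)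
    (hroot : t ^ 2 - μ * α * t + (1 + α) = 0) :
    deriv (fun θ => 1 + α * cos θ ^ 2 - μ * α * sin θ * cos θ) (arctan t)
      = -(1 + α - t ^ 2) / t := by
  have hs : √(1 + t ^ 2) ^ 2 = 1 + t ^ 2 := Real.sq_sqrt (by positivity)
  have hs0 : √(1 + t ^ 2) ≠ 0 := (Real.sqrt_pos.2 (by positivity)).ne'
  rw [(hasDerivAt_pPlus α μ _).deriv, sin_arctan, cos_arctan]
  field_simp
  rw [hs]
  linear_combination (1 - t ^ 2) * hroot

/-- For `α > 0` and `μ > μ_P(α)`, with `λ₁ = p₊'(θ₁)φ₁⁺` and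
`λ₂ = −2 tan(θ₁)φ₁⁺`, the ratio `ξ = λ₂/λ₁` satisfies `ξ < 1` iff
`μ > μ_C(α) = (4/α)√((α+1)/3)`. -/
theorem xi_lt_one_iff_mu_gt_muC (α μ : ℝ) (hα : 0 < α)
    (hμP : 2 / α * Real.sqrt (1 + α) < μ) :
    let pplus : ℝ → ℝ := fun θ => 1 + α * Real.cos θ ^ 2 - μ * α * Real.sin θ * Real.cos θ
    let θ₁ : ℝ := Real.arctan ((μ * α - Real.sqrt (μ ^ 2 * α ^ 2 - 4 * (1 + α))) / 2)
    let φ₁ : ℝ := Real.sqrt (1 / Real.sin θ₁)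
    let lam₁ : ℝ := deriv pplus θ₁ * φ₁
    let lam₂ : ℝ := -2 * Real.tan θ₁ * φ₁
    (lam₂ / lam₁ < 1 ↔ 4 / α * Real.sqrt ((α + 1) / 3) < μ) := by
  intro pplus θ₁ φ₁ lam₁ lam₂
  have hc : (0 : ℝ) < 1 + α := by linarith
  have hb : 2 * √(1 + α) < μ * α := by rwa [div_mul_eq_mul_div, div_lt_iff₀ hα] at hμP
  have hθ₁ : θ₁ = arctan (smallerRoot (μ * α) (1 + α)) := by simp only [θ₁, smallerRoot, mul_pow]
  set t := smallerRoot (μ * α) (1 + α)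
  have ht := smallerRoot_pos hc hb
  have htc := smallerRoot_sq_lt hc hb
  have hroot := smallerRoot_isRoot (discrim_pos_of_two_sqrt_lt hc hb).le
  have hφ₁ : φ₁ ≠ 0 := (Real.sqrt_pos.2 (by rw [hθ₁]; simpa [sin_arctan_pos])).ne'
  have hderiv : deriv pplus θ₁ = -(1 + α - t ^ 2) / t := by
    rw [hθ₁]; exact deriv_pPlus_arctan ht.ne' hroot
  have hξ : lam₂ / lam₁ = 2 * t ^ 2 / (1 + α - t ^ 2) := by
    rw [show lam₂ / lam₁ = -2 * tan θ₁ * φ₁ / (deriv pplus θ₁ * φ₁) from rfl, hderiv,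
      mul_div_mul_right _ _ hφ₁, hθ₁, tan_arctan]
    field_simp
  rw [hξ, div_lt_one (by linarith), div_mul_eq_mul_div, div_lt_iff₀ hα, add_comm α,
    ← three_mul_smallerRoot_sq_lt_iff hc hb]
  constructor <;> intro h <;> linarith
end

section
/- Let ξ ∈ (0,1). The function La_ξ(θ) = ∫₀^∞ exp(−τ³/3 + θτ) τ^{−ξ} dτ is well defined for every θ ∈ ℝ (the integrand is Lebesgue integrable on (0,∞)), is three times differentiable, and solves Langer's equation: La_ξ'''(θ) = θ·La_ξ'(θ) + (1−ξ)·La_ξ(θ) for all θ ∈ ℝ. -/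
/-!
Differentiating under the integral sign multiplies the integrand by `τ`, so
`La^{(k)}(θ) = ∫₀^∞ exp(−τ³/3 + θτ) τ^{k−ξ} dτ`; the cubic decay dominates the integrand
locally uniformly in `θ`. Writing `E = exp(−τ³/3 + θτ)`, the exact derivative
`d/dτ [E τ^{1−ξ}] = θ E τ^{1−ξ} + (1−ξ) E τ^{−ξ} − E τ^{3−ξ}` integrates over `(0,∞)` to `0`,
since `τ^{1−ξ}` vanishes at `0` and `E` decays at `∞`; this is `θ La' + (1−ξ) La − La''' = 0`.
-/

open Real MeasureTheory Set Filter

noncomputable section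

def langerKernel (α θ τ : ℝ) : ℝ := exp (-τ ^ 3 / 3 + θ * τ) * τ ^ α

def langerIntegral (α θ : ℝ) : ℝ := ∫ τ in Ioi 0, langerKernel α θ τ

lemma langerKernel_nonneg (α θ : ℝ) {τ : ℝ} (hτ : 0 ≤ τ) : 0 ≤ langerKernel α θ τ :=
  mul_nonneg (exp_nonneg _) (rpow_nonneg hτ α)

lemma langerKernel_mono_param (α : ℝ) {θ θ' τ : ℝ} (h : θ ≤ θ') (hτ : 0 ≤ τ) :
    langerKernel α θ τ ≤ langerKernel α θ' τ := by
  unfold langerKernel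
  gcongr

lemma langerKernel_le_of_le_one (α θ : ℝ) {τ : ℝ} (h0 : 0 ≤ τ) (h1 : τ ≤ 1) :
    langerKernel α θ τ ≤ exp |θ| * τ ^ α := by
  unfold langerKernel
  gcongr
  nlinarith [pow_nonneg h0 3, mul_le_mul_of_nonneg_right (le_abs_self θ) h0,
    mul_le_mul_of_nonneg_left h1 (abs_nonneg θ)]

lemma neg_cube_div_three_add_mul_le {b τ : ℝ} (hτ : 1 ≤ τ) :
    -τ ^ 3 / 3 + b * τ ≤ 3 * b ^ 2 / 4 := by
  nlinarith [sq_nonneg (2 * τ - 3 * b), mul_nonneg (sq_nonneg τ) (sub_nonneg.2 hτ)]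

lemma langerKernel_le_exp_neg (α θ : ℝ) {τ : ℝ} (hτ : 1 ≤ τ) :
    langerKernel α θ τ ≤ exp (3 * (|θ| + |α| + 1) ^ 2 / 4) * exp (-τ) := by
  have hτ0 : 0 < τ := one_pos.trans_le hτ
  have hlog : log τ * α ≤ |α| * τ :=
    calc log τ * α ≤ log τ * |α| :=
          mul_le_mul_of_nonneg_left (le_abs_self α) (log_nonneg hτ)
      _ ≤ τ * |α| := mul_le_mul_of_nonneg_right
          ((log_le_sub_one_of_pos hτ0).trans (by linarith)) (abs_nonneg α)
      _ = |α| * τ := mul_comm _ _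
  have hθ : θ * τ ≤ |θ| * τ := mul_le_mul_of_nonneg_right (le_abs_self θ) hτ0.le
  have hcube := neg_cube_div_three_add_mul_le (b := |θ| + |α| + 1) hτ
  rw [langerKernel, rpow_def_of_pos hτ0, ← exp_add, ← exp_add, exp_le_exp]
  linarith

lemma continuousAt_langerKernel (α θ : ℝ) {τ : ℝ} (h : τ ≠ 0 ∨ 0 ≤ α) :
    ContinuousAt (langerKernel α θ) τ :=
  (by fun_prop : Continuous fun τ : ℝ => exp (-τ ^ 3 / 3 + θ * τ)).continuousAt.mul
    (continuousAt_rpow_const τ α h)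

lemma continuousOn_langerKernel (α θ : ℝ) : ContinuousOn (langerKernel α θ) (Ioi 0) :=
  fun _ hτ => (continuousAt_langerKernel α θ (Or.inl (ne_of_gt hτ))).continuousWithinAt

lemma integrableOn_langerKernel {α : ℝ} (hα : -1 < α) (θ : ℝ) :
    IntegrableOn (langerKernel α θ) (Ioi 0) := by
  have hmeas := (continuousOn_langerKernel α θ).aestronglyMeasurable (μ := volume)
    measurableSet_Ioi
  rw [← Ioc_union_Ioi_eq_Ioi zero_le_one]
  refine IntegrableOn.union ?_ ?_
  · have hdom : IntegrableOn (fun τ : ℝ => exp |θ| * τ ^ α) (Ioc 0 1) :=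
      (((intervalIntegral.integrableOn_Ioo_rpow_iff one_pos).2 hα).congr_set_ae
        Ioo_ae_eq_Ioc.symm).const_mul _
    refine hdom.mono' (hmeas.mono_set Ioc_subset_Ioi_self) ?_
    filter_upwards [ae_restrict_mem measurableSet_Ioc] with τ hτ
    rw [norm_of_nonneg (langerKernel_nonneg α θ hτ.1.le)]
    exact langerKernel_le_of_le_one α θ hτ.1.le hτ.2
  · have hdom : IntegrableOn (fun τ : ℝ => exp (3 * (|θ| + |α| + 1) ^ 2 / 4) * exp (-τ))
        (Ioi 1) := by simpa [IntegrableOn] using (exp_neg_integrableOn_Ioi 1 one_pos).const_mul _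
    refine hdom.mono' (hmeas.mono_set (Ioi_subset_Ioi zero_le_one)) ?_
    filter_upwards [ae_restrict_mem measurableSet_Ioi] with τ hτ
    rw [norm_of_nonneg (langerKernel_nonneg α θ (zero_le_one.trans hτ.le))]
    exact langerKernel_le_exp_neg α θ hτ.le

lemma hasDerivAt_langerKernel_param (α : ℝ) {τ : ℝ} (hτ : 0 < τ) (θ : ℝ) :
    HasDerivAt (langerKernel α · τ) (langerKernel (α + 1) θ τ) θ := by
  have hlin : HasDerivAt (fun t : ℝ => -τ ^ 3 / 3 + t * τ) τ θ := by
    simpa using ((hasDerivAt_id θ).mul_const τ).const_add (-τ ^ 3 / 3)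
  refine (hlin.exp.mul_const (τ ^ α)).congr_deriv ?_
  rw [langerKernel, rpow_add_one hτ.ne']
  ring

lemma hasDerivAt_langerIntegral {α : ℝ} (hα : -1 < α) (θ : ℝ) :
    HasDerivAt (langerIntegral α) (langerIntegral (α + 1) θ) θ := by
  refine (hasDerivAt_integral_of_dominated_loc_of_deriv_le (Metric.ball_mem_nhds θ one_pos)
    (.of_forall fun t => (integrableOn_langerKernel hα t).aestronglyMeasurable)
    (integrableOn_langerKernel hα θ)
    (integrableOn_langerKernel (by linarith) θ).aestronglyMeasurable ?_
    (integrableOn_langerKernel (α := α + 1) (by linarith) (|θ| + 1)) ?_).2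
  · filter_upwards [ae_restrict_mem measurableSet_Ioi] with τ hτ t ht
    rw [norm_of_nonneg (langerKernel_nonneg _ t (le_of_lt hτ))]
    refine langerKernel_mono_param _ ?_ (le_of_lt hτ)
    linarith [(abs_lt.1 (Metric.mem_ball.1 ht)).2, le_abs_self θ]
  · filter_upwards [ae_restrict_mem measurableSet_Ioi] with τ hτ t _
    exact hasDerivAt_langerKernel_param α hτ t

lemma deriv_langerIntegral {α : ℝ} (hα : -1 < α) :
    deriv (langerIntegral α) = langerIntegral (α + 1) :=
  funext fun θ => (hasDerivAt_langerIntegral hα θ).deriv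

lemma differentiable_langerIntegral {α : ℝ} (hα : -1 < α) :
    Differentiable ℝ (langerIntegral α) :=
  fun θ => (hasDerivAt_langerIntegral hα θ).differentiableAt

lemma hasDerivAt_langerKernel (α θ : ℝ) {τ : ℝ} (hτ : 0 < τ) :
    HasDerivAt (langerKernel (α + 1) θ)
      (θ * langerKernel (α + 1) θ τ + (α + 1) * langerKernel α θ τ
        - langerKernel (α + 3) θ τ) τ := by
  have hexp : HasDerivAt (fun τ : ℝ => -τ ^ 3 / 3 + θ * τ) (-τ ^ 2 + θ) τ := by
    refine (((hasDerivAt_pow 3 τ).neg.div_const 3).add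
      ((hasDerivAt_id τ).const_mul θ)).congr_deriv ?_
    norm_num
    ring
  have hpow : HasDerivAt (fun τ : ℝ => τ ^ (α + 1)) ((α + 1) * τ ^ α) τ := by
    simpa using hasDerivAt_rpow_const (x := τ) (p := α + 1) (Or.inl hτ.ne')
  refine (hexp.exp.mul hpow).congr_deriv ?_
  have h3 : τ ^ (α + 3) = τ ^ (α + 1) * τ ^ 2 := by
    rw [show α + 3 = α + 1 + 1 + 1 by ring, rpow_add_one hτ.ne', rpow_add_one hτ.ne']
    ring
  simp only [langerKernel, h3]
  ring

lemma tendsto_langerKernel_atTop (α θ : ℝ) : Tendsto (langerKernel α θ) atTop (nhds 0) := by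
  have hdom :
      Tendsto (fun τ : ℝ => exp (3 * (|θ| + |α| + 1) ^ 2 / 4) * exp (-τ)) atTop (nhds 0) := by
    simpa using (tendsto_exp_atBot.comp tendsto_neg_atTop_atBot).const_mul
      (exp (3 * (|θ| + |α| + 1) ^ 2 / 4))
  refine squeeze_zero' ?_ ?_ hdom
  · filter_upwards [eventually_ge_atTop 0] with τ hτ using langerKernel_nonneg α θ hτ
  · filter_upwards [eventually_ge_atTop 1] with τ hτ using langerKernel_le_exp_neg α θ hτ

theorem langerIntegral_add_three {α : ℝ} (hα : -1 < α) (θ : ℝ) :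
    langerIntegral (α + 3) θ =
      θ * langerIntegral (α + 1) θ + (α + 1) * langerIntegral α θ := by
  have hα1 : 0 < α + 1 := by linarith
  have i3 := integrableOn_langerKernel (α := α + 3) (by linarith) θ
  have i1 := integrableOn_langerKernel (α := α + 1) (by linarith) θ
  have i0 := integrableOn_langerKernel hα θ
  have i10 : IntegrableOn
      (fun τ => θ * langerKernel (α + 1) θ τ + (α + 1) * langerKernel α θ τ) (Ioi 0) :=
    (i1.const_mul θ).add (i0.const_mul _)
  have hcont : ContinuousWithinAt (langerKernel (α + 1) θ) (Ici 0) 0 :=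
    (continuousAt_langerKernel _ θ (Or.inr hα1.le)).continuousWithinAt
  have hzero : langerKernel (α + 1) θ 0 = 0 := by
    simp [langerKernel, zero_rpow hα1.ne']
  have hboundary := integral_Ioi_of_hasDerivAt_of_tendsto hcont
    (fun τ hτ => hasDerivAt_langerKernel α θ hτ) (i10.sub i3)
    (tendsto_langerKernel_atTop (α + 1) θ)
  rw [integral_sub i10 i3,
    integral_add (i1.const_mul θ) (i0.const_mul _), integral_const_mul, integral_const_mul,
    hzero, sub_zero] at hboundary
  unfold langerIntegral
  linarith

/-- For `ξ ∈ (0,1)`, `La_ξ(θ) = ∫₀^∞ exp(−τ³/3 + θτ) τ^{−ξ} dτ` is well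
defined (the integrand is integrable on `(0,∞)`) for every `θ`, is three times
differentiable, and solves Langer's equation
`La_ξ'''(θ) = θ·La_ξ'(θ) + (1−ξ)·La_ξ(θ)`. -/
theorem La_solves_langer (ξ : ℝ) (hξ : ξ ∈ Set.Ioo (0 : ℝ) 1) :
    let La : ℝ → ℝ := fun θ => ∫ τ in Set.Ioi (0 : ℝ),
      Real.exp (-τ ^ 3 / 3 + θ * τ) * τ ^ (-ξ)
    (∀ θ : ℝ, IntegrableOn
      (fun τ : ℝ => Real.exp (-τ ^ 3 / 3 + θ * τ) * τ ^ (-ξ)) (Set.Ioi 0)) ∧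
    Differentiable ℝ La ∧
    Differentiable ℝ (deriv La) ∧
    Differentiable ℝ (deriv (deriv La)) ∧
    ∀ θ : ℝ, deriv (deriv (deriv La)) θ = θ * deriv La θ + (1 - ξ) * La θ := by
  intro La
  have hα : -1 < -ξ := by linarith [hξ.2]
  rw [show La = langerIntegral (-ξ) from rfl, deriv_langerIntegral hα,
    deriv_langerIntegral (α := -ξ + 1) (by linarith),
    deriv_langerIntegral (α := -ξ + 1 + 1) (by linarith)]
  refine ⟨integrableOn_langerKernel hα, differentiable_langerIntegral hα,
    differentiable_langerIntegral (by linarith), differentiable_langerIntegral (by linarith),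
    fun θ => ?_⟩
  rw [show -ξ + 1 + 1 + 1 = -ξ + 3 by ring, show 1 - ξ = -ξ + 1 by ring]
  exact langerIntegral_add_three hα θ
end
end

section
/- Let ξ ∈ (0,1). Then La_ξ(θ) · θ^{3/4 − (1−ξ)/2} · exp(−2θ^{3/2}/3) tends to √π as θ → +∞; equivalently, La_ξ(θ) = √π · θ^{(1−ξ)/2 − 3/4} · exp(2θ^{3/2}/3) · (1 + o(1)) as θ → +∞. -/
open Real Filter MeasureTheory Set

lemma La_aux_comp_add_right_Ioi (f : ℝ → ℝ) (a c : ℝ) :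
    (∫ x in Set.Ioi a, f (x + c)) = ∫ x in Set.Ioi (a + c), f x := by
  rw [← integral_indicator measurableSet_Ioi, ← integral_indicator measurableSet_Ioi,
    ← integral_add_right_eq_self ((Set.Ioi (a + c)).indicator f) c]
  congr 1
  ext x
  by_cases h : x ∈ Set.Ioi a
  · rw [Set.indicator_of_mem h, Set.indicator_of_mem (by simpa using add_lt_add_right (Set.mem_Ioi.mp h) c)]
  · rw [Set.indicator_of_notMem h, Set.indicator_of_notMem (by
      simp only [Set.mem_Ioi] at h ⊢; intro hc; exact h (by linarith))]

lemma La_aux_young {θ τ : ℝ} (hθ : 0 ≤ θ) (hτ : 0 < τ) :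
    θ * τ ≤ τ ^ 3 / 6 + θ * Real.sqrt (6 * θ) := by
  set s := Real.sqrt (6 * θ) with hs
  have hs0 : 0 ≤ s := Real.sqrt_nonneg _
  have hs2 : s ^ 2 = 6 * θ := Real.sq_sqrt (by linarith)
  nlinarith [sq_nonneg (τ - s), sq_nonneg (τ + s), mul_nonneg (mul_nonneg hs0 hτ.le) hτ.le,
    mul_nonneg (mul_nonneg hs0 hs0) hτ.le, mul_nonneg hs0 hτ.le]

lemma La_aux_integrable (ξ : ℝ) (hξ : ξ ∈ Set.Ioo (0 : ℝ) 1) {θ : ℝ} (hθ : 0 ≤ θ) :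
    IntegrableOn (fun τ : ℝ => Real.exp (-τ ^ 3 / 3 + θ * τ) * τ ^ (-ξ)) (Set.Ioi 0) := by
  have hmeas : Measurable (fun τ : ℝ => Real.exp (-τ ^ 3 / 3 + θ * τ) * τ ^ (-ξ)) := by
    fun_prop
  have hbase : IntegrableOn (fun τ : ℝ => τ ^ (-ξ) * Real.exp (-(1/6) * τ ^ (3:ℝ))) (Set.Ioi 0) :=
    integrableOn_rpow_mul_exp_neg_mul_rpow (by linarith [hξ.2] : (-1:ℝ) < -ξ)
      (by norm_num) (by norm_num)
  have hint : IntegrableOn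
      (fun τ : ℝ => Real.exp (θ * Real.sqrt (6 * θ)) *
        (τ ^ (-ξ) * Real.exp (-(1/6) * τ ^ (3:ℝ)))) (Set.Ioi 0) := hbase.const_mul _
  refine hint.mono' hmeas.aestronglyMeasurable ?_
  filter_upwards [ae_restrict_mem measurableSet_Ioi] with τ hτ
  have hτ0 : 0 < τ := hτ
  have h1 : -τ ^ 3 / 3 + θ * τ ≤ θ * Real.sqrt (6 * θ) + (-(1/6) * τ ^ (3:ℝ)) := by
    have := La_aux_young hθ hτ0
    have h3 : τ ^ (3:ℝ) = τ ^ (3:ℕ) := by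
      rw [← Real.rpow_natCast τ 3]; norm_num
    rw [h3]
    linarith
  have h2 : (0:ℝ) ≤ τ ^ (-ξ) := Real.rpow_nonneg hτ0.le _
  rw [Real.norm_eq_abs, abs_of_nonneg (mul_nonneg (Real.exp_pos _).le h2)]
  calc Real.exp (-τ ^ 3 / 3 + θ * τ) * τ ^ (-ξ)
      ≤ Real.exp (θ * Real.sqrt (6 * θ) + (-(1/6) * τ ^ (3:ℝ))) * τ ^ (-ξ) := by
        exact mul_le_mul_of_nonneg_right (Real.exp_le_exp.mpr h1) h2
    _ = Real.exp (θ * Real.sqrt (6 * θ)) * (τ ^ (-ξ) * Real.exp (-(1/6) * τ ^ (3:ℝ))) := by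
        rw [Real.exp_add]; ring

lemma La_aux_B (ξ : ℝ) (hξ : ξ ∈ Set.Ioo (0 : ℝ) 1) :
    Tendsto (fun θ : ℝ =>
      (∫ τ in Set.Ioc (0:ℝ) (Real.sqrt θ / 2), Real.exp (-τ ^ 3 / 3 + θ * τ) * τ ^ (-ξ)) *
        θ ^ (3 / 4 - (1 - ξ) / 2) * Real.exp (-(2 * θ ^ ((3 : ℝ) / 2) / 3)))
      atTop (nhds 0) := by
  obtain ⟨hξ0, hξ1⟩ := hξ
  have hE : Tendsto (fun θ : ℝ => (1/(1-ξ)) * ((θ ^ ((3:ℝ)/2)) ^ ((1:ℝ)/2) * Real.exp (-(1/6) * θ ^ ((3:ℝ)/2))))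
      atTop (nhds 0) := by
    have base := tendsto_rpow_mul_exp_neg_mul_atTop_nhds_zero (1/2) (1/6) (by norm_num)
    have comp := base.comp (tendsto_rpow_atTop (by norm_num : (0:ℝ) < 3/2))
    simpa using (comp.const_mul (1/(1-ξ)))
  refine tendsto_of_tendsto_of_tendsto_of_le_of_le' tendsto_const_nhds hE ?_ ?_
  · filter_upwards [eventually_ge_atTop (1:ℝ)] with θ hθ1
    have hI : 0 ≤ ∫ τ in Set.Ioc (0:ℝ) (Real.sqrt θ / 2), Real.exp (-τ ^ 3 / 3 + θ * τ) * τ ^ (-ξ) := by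
      apply setIntegral_nonneg measurableSet_Ioc
      intro τ hτ
      exact mul_nonneg (Real.exp_pos _).le (Real.rpow_nonneg hτ.1.le _)
    positivity
  · filter_upwards [eventually_ge_atTop (1:ℝ)] with θ hθ1
    have hθ0 : (0:ℝ) < θ := zero_lt_one.trans_le hθ1
    set a := Real.sqrt θ / 2 with ha
    have ha0 : 0 ≤ a := by positivity
    have hts : θ * Real.sqrt θ = θ ^ ((3:ℝ)/2) := by
      have h32 : ((3:ℝ)/2) = 1 + 1/2 := by norm_num
      rw [h32, Real.rpow_add hθ0, Real.rpow_one, Real.sqrt_eq_rpow]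
    have hIbound : (∫ τ in Set.Ioc (0:ℝ) a, Real.exp (-τ ^ 3 / 3 + θ * τ) * τ ^ (-ξ))
        ≤ Real.exp (θ ^ ((3:ℝ)/2) / 2) * (a ^ (1 - ξ) / (1 - ξ)) := by
      have hrint : IntegrableOn (fun τ : ℝ => Real.exp (θ ^ ((3:ℝ)/2) / 2) * τ ^ (-ξ)) (Set.Ioc 0 a) := by
        exact ((intervalIntegrable_iff_integrableOn_Ioc_of_le ha0).mp
          (intervalIntegral.intervalIntegrable_rpow' (by linarith))).const_mul _
      have hfint : IntegrableOn (fun τ : ℝ => Real.exp (-τ ^ 3 / 3 + θ * τ) * τ ^ (-ξ)) (Set.Ioc 0 a) :=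
        (La_aux_integrable ξ ⟨hξ0, hξ1⟩ hθ0.le).mono_set Set.Ioc_subset_Ioi_self
      have step1 : (∫ τ in Set.Ioc (0:ℝ) a, Real.exp (-τ ^ 3 / 3 + θ * τ) * τ ^ (-ξ))
          ≤ ∫ τ in Set.Ioc (0:ℝ) a, Real.exp (θ ^ ((3:ℝ)/2) / 2) * τ ^ (-ξ) := by
        apply setIntegral_mono_on hfint hrint measurableSet_Ioc
        intro τ hτ
        have hτ0 : 0 < τ := hτ.1
        have hexp : -τ ^ 3 / 3 + θ * τ ≤ θ ^ ((3:ℝ)/2) / 2 := by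
          have h1 : θ * τ ≤ θ * a := by
            apply mul_le_mul_of_nonneg_left hτ.2 hθ0.le
          have h2 : θ * a = θ ^ ((3:ℝ)/2) / 2 := by rw [ha, ← hts]; ring
          nlinarith [pow_pos hτ0 3]
        exact mul_le_mul_of_nonneg_right (Real.exp_le_exp.mpr hexp) (Real.rpow_nonneg hτ0.le _)
      have step2 : (∫ τ in Set.Ioc (0:ℝ) a, Real.exp (θ ^ ((3:ℝ)/2) / 2) * τ ^ (-ξ))
          = Real.exp (θ ^ ((3:ℝ)/2) / 2) * (a ^ (1 - ξ) / (1 - ξ)) := by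
        rw [integral_const_mul]
        congr 1
        rw [← intervalIntegral.integral_of_le ha0,
          integral_rpow (Or.inl (by linarith : (-1:ℝ) < -ξ))]
        rw [Real.zero_rpow (by linarith : -ξ + 1 ≠ 0)]
        norm_num
        rw [show -ξ + 1 = 1 - ξ by ring]
      linarith [step1, step2.le, step2.ge]
    have hpow : a ^ (1 - ξ) ≤ θ ^ ((1 - ξ)/2) := by
      have h1 : a ≤ θ ^ ((1:ℝ)/2) := by
        rw [← Real.sqrt_eq_rpow]; rw [ha]; linarith [Real.sqrt_nonneg θ]
      calc a ^ (1-ξ) ≤ (θ ^ ((1:ℝ)/2)) ^ (1-ξ) := Real.rpow_le_rpow ha0 h1 (by linarith)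
        _ = θ ^ ((1-ξ)/2) := by rw [← Real.rpow_mul hθ0.le]; ring_nf
    have hmulpow : θ ^ ((1-ξ)/2) * θ ^ (3 / 4 - (1 - ξ) / 2) = (θ ^ ((3:ℝ)/2)) ^ ((1:ℝ)/2) := by
      rw [← Real.rpow_add hθ0, ← Real.rpow_mul hθ0.le]
      norm_num
    have hexpmul : Real.exp (θ ^ ((3:ℝ)/2) / 2) * Real.exp (-(2 * θ ^ ((3 : ℝ) / 2) / 3))
        = Real.exp (-(1/6) * θ ^ ((3:ℝ)/2)) := by
      rw [← Real.exp_add]; ring_nf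
    have hθp : (0:ℝ) ≤ θ ^ (3 / 4 - (1 - ξ) / 2) := Real.rpow_nonneg hθ0.le _
    have hEp : (0:ℝ) < Real.exp (-(2 * θ ^ ((3 : ℝ) / 2) / 3)) := Real.exp_pos _
    calc (∫ τ in Set.Ioc (0:ℝ) a, Real.exp (-τ ^ 3 / 3 + θ * τ) * τ ^ (-ξ)) *
          θ ^ (3 / 4 - (1 - ξ) / 2) * Real.exp (-(2 * θ ^ ((3 : ℝ) / 2) / 3))
        ≤ (Real.exp (θ ^ ((3:ℝ)/2) / 2) * (a ^ (1 - ξ) / (1 - ξ))) *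
          θ ^ (3 / 4 - (1 - ξ) / 2) * Real.exp (-(2 * θ ^ ((3 : ℝ) / 2) / 3)) := by
          gcongr
      _ ≤ (Real.exp (θ ^ ((3:ℝ)/2) / 2) * (θ ^ ((1-ξ)/2) / (1 - ξ))) *
          θ ^ (3 / 4 - (1 - ξ) / 2) * Real.exp (-(2 * θ ^ ((3 : ℝ) / 2) / 3)) := by
          gcongr
      _ = (1/(1-ξ)) * ((θ ^ ((3:ℝ)/2)) ^ ((1:ℝ)/2) * Real.exp (-(1/6) * θ ^ ((3:ℝ)/2))) := by
          rw [← hmulpow, ← hexpmul]; ring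

/-- The rescaled integrand after the substitution `τ = √θ + u·θ^{-1/4}`. -/
noncomputable def La_g (ξ θ u : ℝ) : ℝ :=
  Real.exp (-u ^ 2 - u ^ 3 * θ ^ (-((3:ℝ)/4)) / 3) * (1 + u * θ ^ (-((3:ℝ)/4))) ^ (-ξ)

lemma La_aux_change (ξ : ℝ) (hξ : ξ ∈ Set.Ioo (0 : ℝ) 1) {θ : ℝ} (hθ1 : 1 ≤ θ) :
    (∫ τ in Set.Ioi (Real.sqrt θ / 2), Real.exp (-τ ^ 3 / 3 + θ * τ) * τ ^ (-ξ)) *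
      θ ^ (3 / 4 - (1 - ξ) / 2) * Real.exp (-(2 * θ ^ ((3 : ℝ) / 2) / 3))
    = ∫ u in Set.Ioi (-(θ ^ ((3:ℝ)/4)) / 2), La_g ξ θ u := by
  have hθ0 : (0:ℝ) < θ := zero_lt_one.trans_le hθ1
  set c : ℝ := θ ^ (-((1:ℝ)/4)) with hc_def
  have hc0 : 0 < c := Real.rpow_pos_of_pos hθ0 _
  -- change of variables: scaling
  have h1 : (∫ x in Set.Ioi (θ ^ ((3:ℝ)/4) / 2),
        Real.exp (-(c * x) ^ 3 / 3 + θ * (c * x)) * (c * x) ^ (-ξ))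
      = c⁻¹ • ∫ τ in Set.Ioi (Real.sqrt θ / 2),
        Real.exp (-τ ^ 3 / 3 + θ * τ) * τ ^ (-ξ) := by
    have hpt : c * (θ ^ ((3:ℝ)/4) / 2) = Real.sqrt θ / 2 := by
      rw [Real.sqrt_eq_rpow, hc_def,
        show θ ^ (-((1:ℝ)/4)) * (θ ^ ((3:ℝ)/4) / 2) = (θ ^ (-((1:ℝ)/4)) * θ ^ ((3:ℝ)/4)) / 2 from by
          ring, ← Real.rpow_add hθ0]
      norm_num
    have := integral_comp_mul_left_Ioi
      (fun τ : ℝ => Real.exp (-τ ^ 3 / 3 + θ * τ) * τ ^ (-ξ)) (θ ^ ((3:ℝ)/4) / 2) hc0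
    rw [hpt] at this
    exact this
  -- change of variables: translation
  have h2 : (∫ u in Set.Ioi (-(θ ^ ((3:ℝ)/4)) / 2),
        Real.exp (-(c * (u + θ ^ ((3:ℝ)/4))) ^ 3 / 3 + θ * (c * (u + θ ^ ((3:ℝ)/4))))
          * (c * (u + θ ^ ((3:ℝ)/4))) ^ (-ξ))
      = ∫ x in Set.Ioi (θ ^ ((3:ℝ)/4) / 2),
        Real.exp (-(c * x) ^ 3 / 3 + θ * (c * x)) * (c * x) ^ (-ξ) := by
    have := La_aux_comp_add_right_Ioi
      (fun x : ℝ => Real.exp (-(c * x) ^ 3 / 3 + θ * (c * x)) * (c * x) ^ (-ξ))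
      (-(θ ^ ((3:ℝ)/4)) / 2) (θ ^ ((3:ℝ)/4))
    rw [this]
    congr 1
    ring
  rw [← h2] at h1
  have h3 : (∫ τ in Set.Ioi (Real.sqrt θ / 2), Real.exp (-τ ^ 3 / 3 + θ * τ) * τ ^ (-ξ))
      = c * ∫ u in Set.Ioi (-(θ ^ ((3:ℝ)/4)) / 2),
          Real.exp (-(c * (u + θ ^ ((3:ℝ)/4))) ^ 3 / 3 + θ * (c * (u + θ ^ ((3:ℝ)/4))))
            * (c * (u + θ ^ ((3:ℝ)/4))) ^ (-ξ) := by
    rw [h1, smul_eq_mul, ← mul_assoc, mul_inv_cancel₀ hc0.ne', one_mul]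
  rw [h3]
  rw [show ∀ A B : ℝ, c * A * θ ^ (3 / 4 - (1 - ξ) / 2) * B
      = (c * θ ^ (3 / 4 - (1 - ξ) / 2) * B) * A from fun _ _ => by ring]
  rw [← integral_const_mul]
  apply setIntegral_congr_fun measurableSet_Ioi
  intro u hu
  dsimp only
  set s : ℝ := θ ^ ((1:ℝ)/2) with hs_def
  have hs0 : 0 < s := Real.rpow_pos_of_pos hθ0 _
  have hsq : s ^ 2 = θ := by
    rw [hs_def, ← Real.rpow_natCast (θ ^ ((1:ℝ)/2)) 2, ← Real.rpow_mul hθ0.le]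
    norm_num
  have hcs : s * c ^ 2 = 1 := by
    rw [hs_def, hc_def, ← Real.rpow_natCast (θ ^ (-((1:ℝ)/4))) 2, ← Real.rpow_mul hθ0.le,
      ← Real.rpow_add hθ0]
    norm_num
  have hc3 : c ^ 3 = θ ^ (-((3:ℝ)/4)) := by
    rw [hc_def, ← Real.rpow_natCast (θ ^ (-((1:ℝ)/4))) 3, ← Real.rpow_mul hθ0.le]
    norm_num
  have hs3 : s ^ 3 = θ ^ ((3:ℝ)/2) := by
    rw [hs_def, ← Real.rpow_natCast (θ ^ ((1:ℝ)/2)) 3, ← Real.rpow_mul hθ0.le]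
    norm_num
  have hsc : c * θ ^ ((3:ℝ)/4) = s := by
    rw [hc_def, hs_def, ← Real.rpow_add hθ0]
    norm_num
  have hθ34 : (0:ℝ) < θ ^ ((3:ℝ)/4) := Real.rpow_pos_of_pos hθ0 _
  have hu' : -(θ ^ ((3:ℝ)/4)) / 2 < u := hu
  have hsc3 : s * c ^ 3 = c := by
    calc s * c ^ 3 = (s * c ^ 2) * c := by ring
      _ = c := by rw [hcs, one_mul]
  have hc3θ : c ^ 3 * θ ^ ((3:ℝ)/4) = 1 := by
    calc c ^ 3 * θ ^ ((3:ℝ)/4) = c ^ 2 * (c * θ ^ ((3:ℝ)/4)) := by ring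
      _ = c ^ 2 * s := by rw [hsc]
      _ = 1 := by rw [mul_comm] at hcs ⊢; linarith [hcs]
  have h1u : (0:ℝ) < 1 + u * θ ^ (-((3:ℝ)/4)) := by
    rw [← hc3]
    have step : -(θ ^ ((3:ℝ)/4)) / 2 * c ^ 3 < u * c ^ 3 := by
      apply mul_lt_mul_of_pos_right hu' (by positivity)
    have : -(θ ^ ((3:ℝ)/4)) / 2 * c ^ 3 = -(1:ℝ)/2 := by
      rw [show -(θ ^ ((3:ℝ)/4)) / 2 * c ^ 3 = -(c ^ 3 * θ ^ ((3:ℝ)/4)) / 2 by ring, hc3θ]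
    linarith
  have hfact : c * (u + θ ^ ((3:ℝ)/4)) = s * (1 + u * θ ^ (-((3:ℝ)/4))) := by
    rw [← hc3]
    calc c * (u + θ ^ ((3:ℝ)/4)) = c * u + c * θ ^ ((3:ℝ)/4) := by ring
      _ = c * u + s := by rw [hsc]
      _ = s * (1 + u * c ^ 3) := by rw [show s * (1 + u * c ^ 3) = s + (s * c ^ 3) * u by ring, hsc3]; ring
  have hexp_eq : Real.exp (-(c * (u + θ ^ ((3:ℝ)/4))) ^ 3 / 3 + θ * (c * (u + θ ^ ((3:ℝ)/4))))
      = Real.exp (2 * θ ^ ((3:ℝ)/2) / 3) * Real.exp (-u ^ 2 - u ^ 3 * θ ^ (-((3:ℝ)/4)) / 3) := by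
    rw [← Real.exp_add]
    congr 1
    have hcu : c * (u + θ ^ ((3:ℝ)/4)) = s + c * u := by
      rw [mul_add, hsc]; ring
    rw [hcu, ← hs3, ← hc3, ← hsq]
    linear_combination (-(u^2)) * hcs
  have hrpow_eq : (c * (u + θ ^ ((3:ℝ)/4))) ^ (-ξ)
      = s ^ (-ξ) * (1 + u * θ ^ (-((3:ℝ)/4))) ^ (-ξ) := by
    rw [hfact, Real.mul_rpow hs0.le h1u.le]
  have hconsts : c * θ ^ (3 / 4 - (1 - ξ) / 2) * s ^ (-ξ) = 1 := by
    rw [hc_def, hs_def, ← Real.rpow_mul hθ0.le, ← Real.rpow_add hθ0, ← Real.rpow_add hθ0,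
      show -((1:ℝ)/4) + (3 / 4 - (1 - ξ) / 2) + 1/2 * -ξ = 0 by ring, Real.rpow_zero]
  have hexps : Real.exp (-(2 * θ ^ ((3 : ℝ) / 2) / 3)) * Real.exp (2 * θ ^ ((3:ℝ)/2) / 3) = 1 := by
    rw [← Real.exp_add, show -(2 * θ ^ ((3 : ℝ) / 2) / 3) + 2 * θ ^ ((3:ℝ)/2) / 3 = 0 by ring,
      Real.exp_zero]
  rw [hexp_eq, hrpow_eq]
  unfold La_g
  calc c * θ ^ (3 / 4 - (1 - ξ) / 2) * Real.exp (-(2 * θ ^ ((3 : ℝ) / 2) / 3)) *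
        (Real.exp (2 * θ ^ ((3:ℝ)/2) / 3) * Real.exp (-u ^ 2 - u ^ 3 * θ ^ (-((3:ℝ)/4)) / 3) *
          (s ^ (-ξ) * (1 + u * θ ^ (-((3:ℝ)/4))) ^ (-ξ)))
      = (c * θ ^ (3 / 4 - (1 - ξ) / 2) * s ^ (-ξ)) *
        (Real.exp (-(2 * θ ^ ((3 : ℝ) / 2) / 3)) * Real.exp (2 * θ ^ ((3:ℝ)/2) / 3)) *
        (Real.exp (-u ^ 2 - u ^ 3 * θ ^ (-((3:ℝ)/4)) / 3) *
          (1 + u * θ ^ (-((3:ℝ)/4))) ^ (-ξ)) := by ring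
    _ = Real.exp (-u ^ 2 - u ^ 3 * θ ^ (-((3:ℝ)/4)) / 3) * (1 + u * θ ^ (-((3:ℝ)/4))) ^ (-ξ) := by
        rw [hconsts, hexps, one_mul, one_mul]


lemma La_g_measurable (ξ θ : ℝ) : Measurable (La_g ξ θ) := by
  unfold La_g
  fun_prop

lemma La_aux_A (ξ : ℝ) (hξ : ξ ∈ Set.Ioo (0 : ℝ) 1) :
    Tendsto (fun θ : ℝ => ∫ u in Set.Ioi (-(θ ^ ((3:ℝ)/4)) / 2), La_g ξ θ u)
      atTop (nhds (Real.sqrt π)) := by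
  obtain ⟨hξ0, hξ1⟩ := hξ
  have key : Tendsto (fun θ : ℝ => ∫ u, (Set.Ioi (-(θ ^ ((3:ℝ)/4)) / 2)).indicator (La_g ξ θ) u)
      atTop (nhds (∫ u : ℝ, Real.exp (-1 * u ^ 2))) := by
    apply tendsto_integral_filter_of_dominated_convergence
      (fun u : ℝ => 2 * Real.exp (-(1/2) * u ^ 2))
    · filter_upwards with θ
      exact ((La_g_measurable ξ θ).indicator measurableSet_Ioi).aestronglyMeasurable
    · filter_upwards [eventually_ge_atTop (1:ℝ)] with θ hθ1
      apply ae_of_all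
      intro u
      have hθ0 : (0:ℝ) < θ := zero_lt_one.trans_le hθ1
      set ε : ℝ := θ ^ (-((3:ℝ)/4)) with hε_def
      have hε0 : 0 < ε := Real.rpow_pos_of_pos hθ0 _
      have hεθ : ε * θ ^ ((3:ℝ)/4) = 1 := by
        rw [hε_def, ← Real.rpow_add hθ0]; norm_num
      by_cases hu : u ∈ Set.Ioi (-(θ ^ ((3:ℝ)/4)) / 2)
      · rw [Set.indicator_of_mem hu]
        have hu' : -(θ ^ ((3:ℝ)/4)) / 2 < u := hu
        have huε : -(1:ℝ)/2 ≤ u * ε := by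
          have step : -(θ ^ ((3:ℝ)/4)) / 2 * ε < u * ε := mul_lt_mul_of_pos_right hu' hε0
          have : -(θ ^ ((3:ℝ)/4)) / 2 * ε = -(1:ℝ)/2 := by
            rw [show -(θ ^ ((3:ℝ)/4)) / 2 * ε = -(ε * θ ^ ((3:ℝ)/4)) / 2 from by ring, hεθ]
          linarith
        have h1u : (0:ℝ) < 1 + u * ε := by linarith
        have hval : La_g ξ θ u = Real.exp (-u ^ 2 - u ^ 3 * ε / 3) * (1 + u * ε) ^ (-ξ) := rfl
        rw [Real.norm_eq_abs, hval,
          abs_of_nonneg (mul_nonneg (Real.exp_pos _).le (Real.rpow_nonneg h1u.le _))]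
        have hexp : Real.exp (-u ^ 2 - u ^ 3 * ε / 3) ≤ Real.exp (-(1/2) * u ^ 2) := by
          apply Real.exp_le_exp.mpr
          nlinarith [sq_nonneg u, mul_le_mul_of_nonneg_left huε (sq_nonneg u)]
        have hr : (1 + u * ε) ^ (-ξ) ≤ 2 := by
          have h2 : (1/2:ℝ) ≤ 1 + u * ε := by linarith
          calc (1 + u * ε) ^ (-ξ) ≤ (1/2:ℝ) ^ (-ξ) :=
                Real.rpow_le_rpow_of_nonpos (by norm_num) h2 (by linarith)
            _ ≤ (1/2:ℝ) ^ (-1:ℝ) :=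
                Real.rpow_le_rpow_of_exponent_ge (by norm_num) (by norm_num) (by linarith)
            _ = 2 := by rw [Real.rpow_neg_one]; norm_num
        calc Real.exp (-u ^ 2 - u ^ 3 * ε / 3) * (1 + u * ε) ^ (-ξ)
            ≤ Real.exp (-(1/2) * u ^ 2) * 2 :=
              mul_le_mul hexp hr (Real.rpow_nonneg h1u.le _) (Real.exp_pos _).le
          _ = 2 * Real.exp (-(1/2) * u ^ 2) := by ring
      · rw [Set.indicator_of_notMem hu]
        simp only [norm_zero]
        positivity
    · exact (integrable_exp_neg_mul_sq (by norm_num : (0:ℝ) < 1/2)).const_mul 2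
    · apply ae_of_all
      intro u
      have hev : (fun θ : ℝ => (Set.Ioi (-(θ ^ ((3:ℝ)/4)) / 2)).indicator (La_g ξ θ) u)
          =ᶠ[atTop] fun θ : ℝ => La_g ξ θ u := by
        have h1 : Tendsto (fun θ : ℝ => θ ^ ((3:ℝ)/4) / 2) atTop atTop :=
          (tendsto_rpow_atTop (by norm_num)).atTop_div_const (by norm_num)
        have h2 : Tendsto (fun θ : ℝ => -(θ ^ ((3:ℝ)/4) / 2)) atTop atBot :=
          tendsto_neg_atTop_atBot.comp h1
        filter_upwards [h2.eventually (eventually_lt_atBot u)] with θ hθ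
        have : u ∈ Set.Ioi (-(θ ^ ((3:ℝ)/4)) / 2) := by
          simp only [Set.mem_Ioi, neg_div]
          exact hθ
        rw [Set.indicator_of_mem this]
      have hε : Tendsto (fun θ : ℝ => θ ^ (-((3:ℝ)/4))) atTop (nhds 0) :=
        tendsto_rpow_neg_atTop (by norm_num)
      have hcont : ContinuousAt
          (fun e : ℝ => Real.exp (-u ^ 2 - u ^ 3 * e / 3) * (1 + u * e) ^ (-ξ)) 0 := by
        apply ContinuousAt.mul
        · exact (Real.continuous_exp.comp (by fun_prop)).continuousAt
        · have h1 : ContinuousAt (fun x : ℝ => x ^ (-ξ)) ((fun e : ℝ => 1 + u * e) 0) := by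
            show ContinuousAt (fun x : ℝ => x ^ (-ξ)) (1 + u * 0)
            rw [mul_zero, add_zero]
            exact Real.continuousAt_rpow_const 1 (-ξ) (Or.inl one_ne_zero)
          have h2 : ContinuousAt (fun e : ℝ => 1 + u * e) 0 :=
            (continuous_const.add (continuous_mul_left u)).continuousAt
          exact ContinuousAt.comp (g := fun x : ℝ => x ^ (-ξ))
            (f := fun e : ℝ => 1 + u * e) (x := (0:ℝ)) h1 h2
      have hlim : Tendsto (fun θ : ℝ => La_g ξ θ u) atTop (nhds (Real.exp (-1 * u ^ 2))) := by
        have := hcont.tendsto.comp hε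
        simp only [Function.comp_def, mul_zero, zero_div, add_zero, sub_zero, Real.one_rpow,
          mul_one] at this
        simpa [La_g, neg_mul, one_mul] using this
      exact hlim.congr' hev.symm
  have hval : (∫ u : ℝ, Real.exp (-1 * u ^ 2)) = Real.sqrt π := by
    rw [integral_gaussian]
    norm_num
  rw [hval] at key
  refine key.congr (fun θ => ?_)
  rw [integral_indicator measurableSet_Ioi]

/-- For `ξ ∈ (0,1)`,
`La_ξ(θ) · θ^{3/4 − (1−ξ)/2} · exp(−2θ^{3/2}/3) → √π` as `θ → +∞`, i.e.
`La_ξ(θ) = √π · θ^{(1−ξ)/2 − 3/4} · exp(2θ^{3/2}/3) · (1 + o(1))`. -/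
theorem La_asymptotics_pos_infty (ξ : ℝ) (hξ : ξ ∈ Set.Ioo (0 : ℝ) 1) :
    Tendsto (fun θ : ℝ =>
      (∫ τ in Set.Ioi (0 : ℝ), Real.exp (-τ ^ 3 / 3 + θ * τ) * τ ^ (-ξ)) *
        θ ^ (3 / 4 - (1 - ξ) / 2) * Real.exp (-(2 * θ ^ ((3 : ℝ) / 2) / 3)))
      atTop (nhds (Real.sqrt π)) := by
  have hB := La_aux_B ξ hξ
  have hA := La_aux_A ξ hξ
  have hsum := hB.add hA
  rw [zero_add] at hsum
  refine hsum.congr' ?_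
  filter_upwards [eventually_ge_atTop (1:ℝ)] with θ hθ1
  have hθ0 : (0:ℝ) < θ := zero_lt_one.trans_le hθ1
  have ha0 : (0:ℝ) ≤ Real.sqrt θ / 2 := by positivity
  have hsplit : (∫ τ in Set.Ioi (0 : ℝ), Real.exp (-τ ^ 3 / 3 + θ * τ) * τ ^ (-ξ))
      = (∫ τ in Set.Ioc (0:ℝ) (Real.sqrt θ / 2), Real.exp (-τ ^ 3 / 3 + θ * τ) * τ ^ (-ξ))
      + ∫ τ in Set.Ioi (Real.sqrt θ / 2), Real.exp (-τ ^ 3 / 3 + θ * τ) * τ ^ (-ξ) := by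
    rw [← setIntegral_union (Set.Ioc_disjoint_Ioi le_rfl) measurableSet_Ioi
      ((La_aux_integrable ξ hξ hθ0.le).mono_set Set.Ioc_subset_Ioi_self)
      ((La_aux_integrable ξ hξ hθ0.le).mono_set (Set.Ioi_subset_Ioi ha0)),
      Set.Ioc_union_Ioi_eq_Ioi ha0]
  rw [hsplit, ← La_aux_change ξ hξ hθ1]
  ring
end

section
/- Let ξ ∈ (0,1). Then as θ → −∞, the quantity (−θ)^{1−ξ} · La_ξ(θ) − Γ(1−ξ) is O((−θ)^{−3}); i.e. there exist constants C > 0 and M < 0 such that |(−θ)^{1−ξ} · La_ξ(θ) − Γ(1−ξ)| ≤ C·(−θ)^{−3} for all θ ≤ M. Here Γ is the Gamma function. -/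
open Real MeasureTheory Set

-- auxiliary lemmas
lemma aux_int_h {a : ℝ} (ha : 0 < a) :
    IntegrableOn (fun t : ℝ => Real.exp (-t) * t ^ (a - 1)) (Ioi 0) :=
  Real.GammaIntegral_convergent ha

lemma aux_meas_g (c ξ : ℝ) :
    Measurable (fun t : ℝ => Real.exp (-t ^ 3 / c - t) * t ^ (-ξ)) := by
  fun_prop

lemma aux_int_g {c ξ : ℝ} (hc : 0 < c) (hξ : 0 < ξ) (hξ1 : ξ < 1) :
    IntegrableOn (fun t : ℝ => Real.exp (-t ^ 3 / c - t) * t ^ (-ξ)) (Ioi 0) := by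
  have hh : IntegrableOn (fun t : ℝ => Real.exp (-t) * t ^ (-ξ)) (Ioi 0) := by
    have := aux_int_h (a := 1 - ξ) (by linarith)
    simpa using this
  refine Integrable.mono' hh ((aux_meas_g c ξ).aestronglyMeasurable) ?_
  filter_upwards [ae_restrict_mem measurableSet_Ioi] with t ht
  have ht0 : (0:ℝ) < t := ht
  have h1 : Real.exp (-t ^ 3 / c - t) ≤ Real.exp (-t) := by
    apply Real.exp_le_exp.2
    have h0 : 0 ≤ t ^ 3 / c := by positivity
    have : -t ^ 3 / c = -(t ^ 3 / c) := by ring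
    linarith
  have h2 : (0:ℝ) ≤ t ^ (-ξ) := Real.rpow_nonneg ht0.le _
  rw [Real.norm_eq_abs, abs_of_nonneg (by positivity)]
  exact mul_le_mul_of_nonneg_right h1 h2

/-- For `ξ ∈ (0,1)`, as `θ → −∞`,
`(−θ)^{1−ξ}·La_ξ(θ) − Γ(1−ξ) = O((−θ)^{−3})`: there are `C > 0` and `M < 0` with
`|(−θ)^{1−ξ}·La_ξ(θ) − Γ(1−ξ)| ≤ C·(−θ)^{−3}` for all `θ ≤ M`. -/
theorem La_asymptotics_neg_infty (ξ : ℝ) (hξ : ξ ∈ Set.Ioo (0 : ℝ) 1) :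
    ∃ C > (0 : ℝ), ∃ M < (0 : ℝ), ∀ θ : ℝ, θ ≤ M →
      |(-θ) ^ (1 - ξ) *
          (∫ τ in Set.Ioi (0 : ℝ), Real.exp (-τ ^ 3 / 3 + θ * τ) * τ ^ (-ξ)) -
        Real.Gamma (1 - ξ)| ≤ C * (-θ) ^ (-3 : ℝ) := by
  obtain ⟨hξ0, hξ1⟩ := hξ
  have hG4 : 0 < Real.Gamma (4 - ξ) := Real.Gamma_pos_of_pos (by linarith)
  refine ⟨Real.Gamma (4 - ξ) / 3, by positivity, -1, by norm_num, ?_⟩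
  intro θ hθ
  set s : ℝ := -θ with hsdef
  have hs1 : (1:ℝ) ≤ s := by simp only [hsdef]; linarith
  have hs0 : (0:ℝ) < s := by linarith
  have hs3 : (0:ℝ) < 3 * s ^ 3 := by positivity
  set g : ℝ → ℝ := fun t => Real.exp (-t ^ 3 / (3 * s ^ 3) - t) * t ^ (-ξ) with hg
  set h : ℝ → ℝ := fun t => Real.exp (-t) * t ^ (-ξ) with hh
  -- step 1 : change of variables
  have key : (-θ) ^ (1 - ξ) *
      (∫ τ in Set.Ioi (0 : ℝ), Real.exp (-τ ^ 3 / 3 + θ * τ) * τ ^ (-ξ))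
      = ∫ t in Ioi (0:ℝ), g t := by
    have step1 : (∫ τ in Set.Ioi (0 : ℝ), Real.exp (-τ ^ 3 / 3 + θ * τ) * τ ^ (-ξ))
        = s ^ ξ * ∫ τ in Ioi (0:ℝ), g (s * τ) := by
      rw [← integral_const_mul]
      refine setIntegral_congr_fun measurableSet_Ioi (fun τ hτ => ?_)
      have hτ0 : (0:ℝ) < τ := hτ
      have hmul : (s * τ) ^ (-ξ) = s ^ (-ξ) * τ ^ (-ξ) :=
        Real.mul_rpow hs0.le hτ0.le
      have hexp : -(s * τ) ^ 3 / (3 * s ^ 3) - s * τ = -τ ^ 3 / 3 + θ * τ := by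
        field_simp [hsdef]
        ring
      rw [hg]
      simp only [hexp, hmul]
      have hss : s ^ ξ * s ^ (-ξ) = 1 := by
        rw [← Real.rpow_add hs0]; simp
      linear_combination (-(Real.exp (-τ ^ 3 / 3 + θ * τ) * τ ^ (-ξ))) * hss
    rw [step1, integral_comp_mul_left_Ioi g 0 hs0, mul_zero, smul_eq_mul]
    rw [← mul_assoc, ← mul_assoc]
    have : (-θ) ^ (1 - ξ) * s ^ ξ * s⁻¹ = 1 := by
      rw [show (-θ) = s from rfl, ← Real.rpow_add hs0, ← Real.rpow_neg_one s,
        ← Real.rpow_add hs0]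
      norm_num
    rw [this, one_mul]
  rw [key]
  -- step 2 : Gamma as integral
  have hGam : Real.Gamma (1 - ξ) = ∫ t in Ioi (0:ℝ), h t := by
    rw [Real.Gamma_eq_integral (by linarith)]
    simp [hh]
  rw [hGam]
  have hg_int : IntegrableOn g (Ioi 0) := aux_int_g hs3 hξ0 hξ1
  have hh_int : IntegrableOn h (Ioi 0) := by
    have := aux_int_h (a := 1 - ξ) (by linarith)
    simpa [hh] using this
  rw [← integral_sub hg_int hh_int]
  -- step 3 : bound
  set b : ℝ → ℝ := fun t => (3 * s ^ 3)⁻¹ * (Real.exp (-t) * t ^ (4 - ξ - 1)) with hb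
  have hb_int : IntegrableOn b (Ioi 0) :=
    (aux_int_h (a := 4 - ξ) (by linarith)).const_mul _
  have hbound : ∀ t ∈ Ioi (0:ℝ), |g t - h t| ≤ b t := by
    intro t ht
    have ht0 : (0:ℝ) < t := ht
    have hx : (0:ℝ) ≤ t ^ 3 / (3 * s ^ 3) := by positivity
    have e1 : Real.exp (-t ^ 3 / (3 * s ^ 3) - t)
        = Real.exp (-(t ^ 3 / (3 * s ^ 3))) * Real.exp (-t) := by
      rw [← Real.exp_add]; ring_nf
    have habs : |Real.exp (-(t ^ 3 / (3 * s ^ 3))) - 1| ≤ t ^ 3 / (3 * s ^ 3) := by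
      rw [abs_sub_comm, abs_of_nonneg (by linarith [Real.exp_le_one_iff.mpr (by linarith : -(t ^ 3 / (3 * s ^ 3)) ≤ 0)])]
      have := Real.add_one_le_exp (-(t ^ 3 / (3 * s ^ 3)))
      linarith
    have : g t - h t = (Real.exp (-(t ^ 3 / (3 * s ^ 3))) - 1) * (Real.exp (-t) * t ^ (-ξ)) := by
      simp only [hg, hh, e1]; ring
    rw [this, abs_mul, abs_of_nonneg (show (0:ℝ) ≤ Real.exp (-t) * t ^ (-ξ) by positivity)]
    have h2 : b t = (t ^ 3 / (3 * s ^ 3)) * (Real.exp (-t) * t ^ (-ξ)) := by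
      simp only [hb]
      have : t ^ (4 - ξ - 1) = t ^ (3:ℕ) * t ^ (-ξ) := by
        rw [← Real.rpow_natCast t 3, ← Real.rpow_add ht0]
        congr 1; push_cast; ring
      rw [this]; ring
    rw [h2]
    exact mul_le_mul_of_nonneg_right habs (by positivity)
  calc |∫ t in Ioi (0:ℝ), (g t - h t)|
      ≤ ∫ t in Ioi (0:ℝ), |g t - h t| := by
        simpa [Real.norm_eq_abs] using
          MeasureTheory.norm_integral_le_integral_norm (μ := volume.restrict (Ioi 0)) (fun t => g t - h t)
    _ ≤ ∫ t in Ioi (0:ℝ), b t := by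
        refine setIntegral_mono_on ((hg_int.sub hh_int).abs) hb_int measurableSet_Ioi hbound
    _ = (3 * s ^ 3)⁻¹ * Real.Gamma (4 - ξ) := by
        rw [hb, integral_const_mul, Real.Gamma_eq_integral (show (0:ℝ) < 4 - ξ by linarith)]
    _ = Real.Gamma (4 - ξ) / 3 * (-θ) ^ (-3 : ℝ) := by
        rw [show (-θ) = s from rfl]
        rw [Real.rpow_neg hs0.le, show (3:ℝ) = ((3:ℕ):ℝ) by norm_num, Real.rpow_natCast]
        field_simp
end

section
/- Let ξ ∈ (0,1). Then Lb_ξ(θ) · θ^{3/4 − (1−ξ)/2} · exp(2θ^{3/2}/3) tends to √π/2 as θ → +∞; equivalently, Lb_ξ(θ) = (√π/2) · θ^{(1−ξ)/2 − 3/4} · exp(−2θ^{3/2}/3) · (1 + o(1)) as θ → +∞. -/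
/-! The phase `z³/3 + θz` has a saddle point at `z = i√θ`. By Cauchy's theorem on the rectangles
`[ε, T] × [0, √θ]` (letting `ε → 0` past the integrable singularity of `z^{-ξ}` at the origin, and
`T → ∞`, which kills the right side) the integral of `e^{i(z³/3 + θz)} z^{-ξ}` along the positive
real axis equals its integral along the line `Im z = √θ` plus the one along `[0, i√θ]`. After
multiplication by `e^{iξπ/2}` the latter is purely imaginary, so `Lb_ξ(θ)` is the real part of
`e^{iξπ/2}` times the former. On the line `x + i√θ` the integrand is `e^{-2θ^{3/2}/3} e^{-√θ x²}` times an oscillating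
factor, and the substitution `x = θ^{-1/4} u` turns `Lb_ξ(θ) θ^{1/4 + ξ/2} e^{2θ^{3/2}/3}` into
`Re ∫₀^∞ e^{-u² + i(ξπ/2 + c u³/3)} (cu + i)^{-ξ} du` with `c = θ^{-3/4} → 0`. By dominated
convergence this tends to `∫₀^∞ e^{-u²} du = √π/2`. Writing `θ = s⁴` keeps all these exponents
polynomial in `s`. -/

open Real Filter

open Complex MeasureTheory Set Topology

theorem Complex.ofReal_mul_cpow_of_pos {r : ℝ} (hr : 0 < r) (w s : ℂ) :
    ((r : ℂ) * w) ^ s = (r : ℂ) ^ s * w ^ s := by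
  rcases eq_or_ne w 0 with rfl | hw
  · rcases eq_or_ne s 0 with rfl | hs <;> simp [*]
  · have hr' : (r : ℂ) ≠ 0 := ofReal_ne_zero.mpr hr.ne'
    rw [cpow_def_of_ne_zero (mul_ne_zero hr' hw), cpow_def_of_ne_zero hr',
      cpow_def_of_ne_zero hw, log_ofReal_mul hr hw, ← ofReal_log hr.le, add_mul, Complex.exp_add]

theorem Complex.I_cpow (s : ℂ) : I ^ s = cexp (s * (π / 2) * I) := by
  rw [cpow_def_of_ne_zero I_ne_zero, log_I]
  ring_nf

theorem Complex.add_mul_I_mem_slitPlane (x : ℝ) {y : ℝ} (hy : y ≠ 0) :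
    (x : ℂ) + y * I ∈ slitPlane := by
  simp [mem_slitPlane_iff, hy]

theorem integral_boundary_rect_eq_zero_of_differentiableOn_re_pos {E : Type*}
    [NormedAddCommGroup E] [NormedSpace ℂ E] [CompleteSpace E] {f : ℂ → E} {T b : ℝ}
    (hT : 0 < T) (hf : DifferentiableOn ℂ f {z | 0 < z.re})
    (hbot : IntervalIntegrable (fun x : ℝ => f x) volume 0 T)
    (htop : IntervalIntegrable (fun x : ℝ => f (x + b * I)) volume 0 T)
    (hleft : Tendsto (fun ε : ℝ => ∫ y in (0 : ℝ)..b, f (ε + y * I)) (𝓝[>] 0)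
      (𝓝 (∫ y in (0 : ℝ)..b, f (y * I)))) :
    (∫ x in (0 : ℝ)..T, f x) - (∫ x in (0 : ℝ)..T, f (x + b * I)) +
      I • (∫ y in (0 : ℝ)..b, f (T + y * I)) - I • (∫ y in (0 : ℝ)..b, f (y * I)) = 0 := by
  have hIcc : uIcc 0 T ∈ 𝓝[>] (0 : ℝ) := by
    rw [uIcc_of_le hT.le]
    exact Icc_mem_nhdsGT hT
  have hprimitive : ∀ {g : ℝ → E}, IntervalIntegrable g volume 0 T →
      Tendsto (fun ε : ℝ => ∫ x in ε..T, g x) (𝓝[>] 0) (𝓝 (∫ x in (0 : ℝ)..T, g x)) := by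
    intro g hg
    rw [intervalIntegrable_iff_integrableOn_Icc_of_le hT.le, ← uIcc_of_le hT.le] at hg
    exact ((intervalIntegral.continuousOn_primitive_interval_left hg).continuousWithinAt
      left_mem_uIcc).tendsto.mono_left (nhdsWithin_le_of_mem hIcc)
  have hrect : ∀ᶠ ε in 𝓝[>] (0 : ℝ), (∫ x in ε..T, f x) - (∫ x in ε..T, f (x + b * I)) +
      I • (∫ y in (0 : ℝ)..b, f (T + y * I)) - I • (∫ y in (0 : ℝ)..b, f (ε + y * I)) = 0 := by
    filter_upwards [Ioo_mem_nhdsGT hT] with ε hε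
    have hsub : uIcc (ε : ℂ).re (T + b * I).re ×ℂ uIcc (ε : ℂ).im (T + b * I).im ⊆
        {z | 0 < z.re} := fun z hz => by
      have hre : z.re ∈ uIcc ε T := by simpa using hz.1
      exact hε.1.trans_le (uIcc_of_le hε.2.le ▸ hre).1
    simpa using integral_boundary_rect_eq_zero_of_differentiableOn f ε (T + b * I) (hf.mono hsub)
  exact tendsto_nhds_unique ((((hprimitive hbot).sub (hprimitive htop)).add tendsto_const_nhds).sub
    (hleft.const_smul I)) (tendsto_const_nhds.congr' (hrect.mono fun _ h => h.symm))

noncomputable def airyIntegrand (ξ θ : ℝ) (z : ℂ) : ℂ :=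
  cexp (I * (z ^ 3 / 3 + θ * z)) * z ^ (-ξ : ℂ)

section airyIntegrand

variable {ξ θ : ℝ}

theorem differentiableOn_airyIntegrand : DifferentiableOn ℂ (airyIntegrand ξ θ) slitPlane :=
  fun _ hz => (((by fun_prop : Differentiable ℂ fun z : ℂ => cexp (I * (z ^ 3 / 3 + θ * z))) _).mul
    (differentiableAt_id.cpow (differentiableAt_const _) hz)).differentiableWithinAt

theorem continuousOn_airyIntegrand : ContinuousOn (airyIntegrand ξ θ) slitPlane :=
  differentiableOn_airyIntegrand.continuousOn

theorem norm_airyIntegrand (x y : ℝ) :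
    ‖airyIntegrand ξ θ (x + y * I)‖ =
      rexp (-(x ^ 2 * y) + y ^ 3 / 3 - θ * y) * ‖(x : ℂ) + y * I‖ ^ (-ξ) := by
  rw [airyIntegrand, norm_mul, norm_exp, ← ofReal_neg, norm_cpow_real]
  congr 2
  simp [pow_succ]
  ring

theorem norm_airyIntegrand_ofReal {x : ℝ} (hx : 0 ≤ x) : ‖airyIntegrand ξ θ x‖ = x ^ (-ξ) := by
  simpa [abs_of_nonneg hx] using norm_airyIntegrand (ξ := ξ) (θ := θ) x 0

theorem norm_airyIntegrand_le (hξ : 0 ≤ ξ) (x : ℝ) {y : ℝ} (hy : 0 < y) :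
    ‖airyIntegrand ξ θ (x + y * I)‖ ≤
      rexp (-(x ^ 2 * y)) * (rexp (y ^ 3 / 3 - θ * y) * y ^ (-ξ)) := by
  have hnorm : y ≤ ‖(x : ℂ) + y * I‖ := by
    simpa [abs_of_pos hy] using abs_im_le_norm ((x : ℂ) + y * I)
  rw [norm_airyIntegrand, ← mul_assoc, ← Real.exp_add]
  exact mul_le_mul (le_of_eq (by ring_nf)) (rpow_le_rpow_of_nonpos hy hnorm (neg_nonpos.2 hξ))
    (by positivity) (by positivity)

theorem intervalIntegrable_airyIntegrand_ofReal (hξ : ξ < 1) {T : ℝ} (hT : 0 ≤ T) :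
    IntervalIntegrable (fun x : ℝ => airyIntegrand ξ θ x) volume 0 T := by
  refine (intervalIntegral.intervalIntegrable_rpow' (r := -ξ) (by linarith)).mono_fun' ?_ ?_
  · rw [uIoc_of_le hT]
    exact (continuousOn_airyIntegrand.comp continuous_ofReal.continuousOn fun x hx =>
      ofReal_mem_slitPlane.2 hx.1).aestronglyMeasurable measurableSet_Ioc
  · rw [uIoc_of_le hT]
    filter_upwards [ae_restrict_mem measurableSet_Ioc] with x hx
    exact (norm_airyIntegrand_ofReal hx.1.le).le

theorem integrable_airyIntegrand_add_mul_I (hξ : 0 ≤ ξ) {b : ℝ} (hb : 0 < b) :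
    Integrable (fun x : ℝ => airyIntegrand ξ θ (x + b * I)) := by
  refine ((integrable_exp_neg_mul_sq hb).mul_const (rexp (b ^ 3 / 3 - θ * b) * b ^ (-ξ))).mono'
    ?_ (ae_of_all _ fun x => ?_)
  · exact (continuousOn_airyIntegrand.comp_continuous (by fun_prop) fun x =>
      add_mul_I_mem_slitPlane x hb.ne').aestronglyMeasurable
  · simpa [mul_comm b] using norm_airyIntegrand_le hξ x hb

theorem tendsto_integral_airyIntegrand_vertical (hξ0 : 0 ≤ ξ) (hξ1 : ξ < 1) {b : ℝ} (hb : 0 < b)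
    {l : Filter ℝ} [l.IsCountablyGenerated] {F : ℝ → ℂ}
    (hF : ∀ y ∈ Ioc 0 b, Tendsto (fun x : ℝ => airyIntegrand ξ θ (x + y * I)) l (𝓝 (F y))) :
    Tendsto (fun x : ℝ => ∫ y in (0 : ℝ)..b, airyIntegrand ξ θ (x + y * I)) l
      (𝓝 (∫ y in (0 : ℝ)..b, F y)) := by
  refine intervalIntegral.tendsto_integral_filter_of_dominated_convergence
    (fun y => rexp (y ^ 3 / 3 - θ * y) * y ^ (-ξ)) (Eventually.of_forall fun x => ?_)
    (Eventually.of_forall fun x => ae_of_all _ fun y hy => ?_)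
    ((intervalIntegral.intervalIntegrable_rpow' (by linarith)).continuousOn_mul (by fun_prop))
    (ae_of_all _ fun y hy => hF y (uIoc_of_le hb.le ▸ hy))
  · rw [uIoc_of_le hb.le]
    exact (continuousOn_airyIntegrand.comp (by fun_prop) fun y hy =>
      add_mul_I_mem_slitPlane x hy.1.ne').aestronglyMeasurable measurableSet_Ioc
  · rw [uIoc_of_le hb.le] at hy
    refine (norm_airyIntegrand_le hξ0 x hy.1).trans (mul_le_of_le_one_left
      (mul_nonneg (exp_pos _).le (rpow_nonneg hy.1.le _)) ?_)
    exact Real.exp_le_one_iff.2 (neg_nonpos.2 (mul_nonneg (sq_nonneg x) hy.1.le))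

theorem tendsto_intervalIntegral_airyIntegrand (hξ0 : 0 ≤ ξ) (hξ1 : ξ < 1) {b : ℝ} (hb : 0 < b) :
    Tendsto (fun T : ℝ => ∫ x in (0 : ℝ)..T, airyIntegrand ξ θ x) atTop
      (𝓝 ((∫ x in Ioi (0 : ℝ), airyIntegrand ξ θ (x + b * I)) +
        I • ∫ y in (0 : ℝ)..b, airyIntegrand ξ θ (y * I))) := by
  have hleft : Tendsto (fun ε : ℝ => ∫ y in (0 : ℝ)..b, airyIntegrand ξ θ (ε + y * I)) (𝓝[>] 0)
      (𝓝 (∫ y in (0 : ℝ)..b, airyIntegrand ξ θ (y * I))) := by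
    refine tendsto_integral_airyIntegrand_vertical hξ0 hξ1 hb fun y hy => ?_
    have hcont : ContinuousAt (airyIntegrand ξ θ) (y * I) :=
      continuousOn_airyIntegrand.continuousAt (isOpen_slitPlane.mem_nhds
        (by simpa using add_mul_I_mem_slitPlane 0 hy.1.ne'))
    exact hcont.tendsto.comp (((by fun_prop : Continuous fun x : ℝ => (x : ℂ) + y * I).tendsto' 0 _
      (by simp)).mono_left nhdsWithin_le_nhds)
  have hright : Tendsto (fun T : ℝ => ∫ y in (0 : ℝ)..b, airyIntegrand ξ θ (T + y * I)) atTop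
      (𝓝 0) := by
    simpa using tendsto_integral_airyIntegrand_vertical (F := 0) hξ0 hξ1 hb fun y hy =>
      squeeze_zero_norm (norm_airyIntegrand_le hξ0 · hy.1) <| by
        simpa using (tendsto_exp_atBot.comp (tendsto_neg_atTop_atBot.comp
          ((tendsto_pow_atTop two_ne_zero).atTop_mul_const hy.1))).mul_const _
  have hcontour : ∀ᶠ T : ℝ in atTop, (∫ x in (0 : ℝ)..T, airyIntegrand ξ θ (x + b * I)) -
      I • (∫ y in (0 : ℝ)..b, airyIntegrand ξ θ (T + y * I)) +
      I • (∫ y in (0 : ℝ)..b, airyIntegrand ξ θ (y * I)) =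
      ∫ x in (0 : ℝ)..T, airyIntegrand ξ θ x := by
    filter_upwards [eventually_gt_atTop 0] with T hT
    have hrect := integral_boundary_rect_eq_zero_of_differentiableOn_re_pos hT
      (differentiableOn_airyIntegrand.mono fun z hz => Or.inl hz)
      (intervalIntegrable_airyIntegrand_ofReal hξ1 hT.le)
      (integrable_airyIntegrand_add_mul_I hξ0 hb).intervalIntegrable hleft
    linear_combination -hrect
  refine Tendsto.congr' hcontour ?_
  simpa using ((intervalIntegral_tendsto_integral_Ioi 0
    (integrable_airyIntegrand_add_mul_I hξ0 hb).integrableOn tendsto_id).sub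
    (hright.const_smul I)).add_const (I • ∫ y in (0 : ℝ)..b, airyIntegrand ξ θ (y * I))

theorem phase_mul_airyIntegrand_ofReal {x : ℝ} (hx : 0 ≤ x) :
    cexp (↑(ξ * π / 2) * I) * airyIntegrand ξ θ x =
      (x ^ (-ξ) : ℝ) * cexp ((x ^ 3 / 3 + θ * x + ξ * π / 2 : ℝ) * I) := by
  rw [airyIntegrand, ofReal_cpow hx, ← mul_assoc, ← Complex.exp_add]
  push_cast
  ring_nf

theorem intervalIntegral_cos_mul_rpow_eq_re (hξ : ξ < 1) {T : ℝ} (hT : 0 ≤ T) :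
    ∫ τ in (0 : ℝ)..T, Real.cos (τ ^ 3 / 3 + θ * τ + ξ * π / 2) * τ ^ (-ξ) =
      (cexp (↑(ξ * π / 2) * I) * ∫ x in (0 : ℝ)..T, airyIntegrand ξ θ x).re := by
  rw [← intervalIntegral.integral_const_mul, ← reCLM_apply,
    ← ContinuousLinearMap.intervalIntegral_comp_comm _
      ((intervalIntegrable_airyIntegrand_ofReal hξ hT).const_mul _)]
  refine intervalIntegral.integral_congr fun τ hτ => ?_
  rw [uIcc_of_le hT] at hτ
  simp only [reCLM_apply, phase_mul_airyIntegrand_ofReal hτ.1, re_ofReal_mul, exp_ofReal_mul_I_re]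
  ring

theorem phase_mul_airyIntegrand_mul_I {y : ℝ} (hy : 0 < y) :
    cexp (↑(ξ * π / 2) * I) * airyIntegrand ξ θ (y * I) =
      ↑(rexp (y ^ 3 / 3 - θ * y) * y ^ (-ξ)) := by
  rw [airyIntegrand, ofReal_mul_cpow_of_pos hy, I_cpow, ofReal_mul, ofReal_cpow hy.le, ofReal_exp]
  calc _ = cexp (↑(ξ * π / 2) * I + I * ((y * I) ^ 3 / 3 + θ * (y * I)) + -ξ * (π / 2) * I) *
        (y : ℂ) ^ (-ξ : ℂ) := by
        rw [Complex.exp_add, Complex.exp_add]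
        ring
    _ = _ := by
      push_cast
      congr 2
      linear_combination (y ^ 3 / 3 * (I ^ 2 - 1) + θ * y) * I_sq

theorem re_phase_mul_I_smul_integral_airyIntegrand_mul_I {b : ℝ} (hb : 0 ≤ b) :
    (cexp (↑(ξ * π / 2) * I) * (I • ∫ y in (0 : ℝ)..b, airyIntegrand ξ θ (y * I))).re = 0 := by
  rw [smul_eq_mul, mul_left_comm, ← intervalIntegral.integral_const_mul,
    intervalIntegral.integral_congr_ae
      (g := fun y : ℝ => ((rexp (y ^ 3 / 3 - θ * y) * y ^ (-ξ) : ℝ) : ℂ))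
      (ae_of_all _ fun y hy => phase_mul_airyIntegrand_mul_I (uIoc_of_le hb ▸ hy).1),
    intervalIntegral.integral_ofReal]
  simp

theorem tendsto_integral_cos_mul_rpow (hξ0 : 0 ≤ ξ) (hξ1 : ξ < 1) {b : ℝ} (hb : 0 < b) :
    Tendsto (fun T : ℝ => ∫ τ in (0 : ℝ)..T, Real.cos (τ ^ 3 / 3 + θ * τ + ξ * π / 2) * τ ^ (-ξ))
      atTop
      (𝓝 (cexp (↑(ξ * π / 2) * I) * ∫ x in Ioi (0 : ℝ), airyIntegrand ξ θ (x + b * I)).re) := by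
  have h := (continuous_re.tendsto _).comp ((tendsto_intervalIntegral_airyIntegrand (θ := θ)
    hξ0 hξ1 hb).const_mul (cexp (↑(ξ * π / 2) * I)))
  rw [mul_add, add_re, re_phase_mul_I_smul_integral_airyIntegrand_mul_I hb.le, add_zero] at h
  exact h.congr' ((eventually_ge_atTop 0).mono fun T hT =>
    (intervalIntegral_cos_mul_rpow_eq_re hξ1 hT).symm)

end airyIntegrand

noncomputable def saddleIntegrand (ξ c u : ℝ) : ℂ :=
  cexp (-u ^ 2 + (ξ * π / 2 + c * u ^ 3 / 3) * I) * (c * u + I) ^ (-ξ : ℂ)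

section saddleIntegrand

variable {ξ : ℝ}

theorem continuous_saddleIntegrand : Continuous (Function.uncurry (saddleIntegrand ξ)) :=
  (by fun_prop : Continuous fun p : ℝ × ℝ =>
      cexp (-p.2 ^ 2 + (ξ * π / 2 + p.1 * p.2 ^ 3 / 3) * I)).mul
    ((by fun_prop : Continuous fun p : ℝ × ℝ => (p.1 * p.2 : ℂ) + I).cpow continuous_const
      fun p => by simp [mem_slitPlane_iff])

theorem norm_saddleIntegrand_le (hξ : 0 ≤ ξ) (c u : ℝ) :
    ‖saddleIntegrand ξ c u‖ ≤ rexp (-u ^ 2) := by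
  have hnorm : 1 ≤ ‖(c * u : ℂ) + I‖ := by
    simpa using abs_im_le_norm ((c * u : ℂ) + I)
  rw [saddleIntegrand, norm_mul, norm_exp, ← ofReal_neg, norm_cpow_real]
  refine (mul_le_of_le_one_right (exp_pos _).le
    (rpow_le_one_of_one_le_of_nonpos hnorm (by linarith))).trans_eq ?_
  congr 1
  simp [← ofReal_pow]

theorem saddleIntegrand_zero (u : ℝ) : saddleIntegrand ξ 0 u = rexp (-u ^ 2) := by
  simp only [saddleIntegrand, ofReal_zero, zero_mul, zero_add, I_cpow]
  rw [← Complex.exp_add, ofReal_exp]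
  congr 1
  push_cast
  ring

theorem tendsto_integral_saddleIntegrand (hξ : 0 ≤ ξ) :
    Tendsto (fun c : ℝ => ∫ u in Ioi (0 : ℝ), saddleIntegrand ξ c u) (𝓝 0) (𝓝 ↑(√π / 2)) := by
  have hgauss : ∫ u in Ioi (0 : ℝ), saddleIntegrand ξ 0 u = ↑(√π / 2) := by
    rw [setIntegral_congr_fun measurableSet_Ioi fun u _ => saddleIntegrand_zero u,
      integral_complex_ofReal]
    simpa using congrArg ofReal (integral_gaussian_Ioi 1)
  rw [← hgauss]
  refine tendsto_integral_filter_of_dominated_convergence (fun u => rexp (-u ^ 2))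
    (Eventually.of_forall fun c => ?_) (Eventually.of_forall fun c => ae_of_all _ fun u =>
      norm_saddleIntegrand_le hξ c u) ?_ (ae_of_all _ fun u => ?_)
  · exact (continuous_saddleIntegrand.comp (Continuous.prodMk_right c)).aestronglyMeasurable
  · simpa [IntegrableOn] using (integrable_exp_neg_mul_sq one_pos).integrableOn
  · exact (continuous_saddleIntegrand.comp (Continuous.prodMk_left u)).tendsto 0

theorem phase_mul_airyIntegrand_rescaled {s : ℝ} (hs : 0 < s) (x : ℝ) :
    cexp (↑(ξ * π / 2) * I) * airyIntegrand ξ (s ^ 4) (x + ↑(s ^ 2) * I) =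
      ↑(rexp (-(2 / 3 * s ^ 6)) * (s ^ 2) ^ (-ξ)) * saddleIntegrand ξ (s ^ 3)⁻¹ (s * x) := by
  have hs' : (s : ℂ) ≠ 0 := ofReal_ne_zero.2 hs.ne'
  have hpow : ((x : ℂ) + ↑(s ^ 2) * I) ^ (-ξ : ℂ) =
      ↑((s ^ 2) ^ (-ξ)) * (↑((s ^ 3)⁻¹) * ↑(s * x) + I) ^ (-ξ : ℂ) := by
    rw [ofReal_cpow (by positivity), ofReal_neg, ← ofReal_mul_cpow_of_pos (by positivity)]
    congr 1
    push_cast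
    field_simp
  have hexp : cexp (↑(ξ * π / 2) * I) *
      cexp (I * ((x + ↑(s ^ 2) * I) ^ 3 / 3 + ↑(s ^ 4) * (x + ↑(s ^ 2) * I))) =
      ↑(rexp (-(2 / 3 * s ^ 6))) *
        cexp (-↑(s * x) ^ 2 + (ξ * π / 2 + ↑((s ^ 3)⁻¹) * ↑(s * x) ^ 3 / 3) * I) := by
    have hcube : ((s : ℂ) ^ 3)⁻¹ * (s * x) ^ 3 = (x : ℂ) ^ 3 := by field_simp
    rw [← Complex.exp_add, ofReal_exp, ← Complex.exp_add]
    push_cast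
    rw [hcube]
    congr 1
    linear_combination (x ^ 2 * s ^ 2 + x * s ^ 4 * I + s ^ 6 * (I ^ 2 + 2) / 3) * I_sq
  rw [airyIntegrand, saddleIntegrand, hpow, ofReal_mul (rexp _)]
  linear_combination (↑((s ^ 2) ^ (-ξ)) * (↑((s ^ 3)⁻¹) * ↑(s * x) + I) ^ (-ξ : ℂ)) * hexp

theorem re_integral_airyIntegrand_rescaled {s : ℝ} (hs : 0 < s) :
    (cexp (↑(ξ * π / 2) * I) *
        ∫ x in Ioi (0 : ℝ), airyIntegrand ξ (s ^ 4) (x + ↑(s ^ 2) * I)).re *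
      s ^ (1 + 2 * ξ) * rexp (2 * s ^ 6 / 3) =
      (∫ u in Ioi (0 : ℝ), saddleIntegrand ξ (s ^ 3)⁻¹ u).re := by
  set J := ∫ u in Ioi (0 : ℝ), saddleIntegrand ξ (s ^ 3)⁻¹ u
  have hpow : (s ^ 2) ^ (-ξ) * s⁻¹ * s ^ (1 + 2 * ξ) = 1 := by
    rw [← rpow_natCast, ← rpow_mul hs.le, ← rpow_neg_one, ← rpow_add hs, ← rpow_add hs]
    norm_num
  have hexp : rexp (-(2 / 3 * s ^ 6)) * rexp (2 * s ^ 6 / 3) = 1 := by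
    rw [← Real.exp_add]
    ring_nf
    exact Real.exp_zero
  rw [← integral_const_mul]
  simp_rw [phase_mul_airyIntegrand_rescaled hs]
  rw [integral_const_mul, integral_comp_mul_left_Ioi (saddleIntegrand ξ (s ^ 3)⁻¹) 0 hs, mul_zero,
    real_smul, ← mul_assoc, ← ofReal_mul, re_ofReal_mul]
  linear_combination ((s ^ 2) ^ (-ξ) * s⁻¹ * s ^ (1 + 2 * ξ) * J.re) * hexp + J.re * hpow

end saddleIntegrand

/-- For `ξ ∈ (0,1)` and `Lb_ξ` the improper Riemann integral
`lim_{T→∞} ∫₀^T cos(τ³/3 + θτ + ξπ/2) τ^{−ξ} dτ`, one has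
`Lb_ξ(θ) · θ^{3/4 − (1−ξ)/2} · exp(2θ^{3/2}/3) → √π/2` as `θ → +∞`. -/
theorem Lb_asymptotics_pos_infty (ξ : ℝ) (hξ : ξ ∈ Set.Ioo (0 : ℝ) 1)
    (Lb : ℝ → ℝ)
    (hLb : ∀ θ : ℝ, Tendsto
      (fun T : ℝ => ∫ τ in (0 : ℝ)..T,
        Real.cos (τ ^ 3 / 3 + θ * τ + ξ * π / 2) * τ ^ (-ξ))
      atTop (nhds (Lb θ))) :
    Tendsto (fun θ : ℝ =>
      Lb θ * θ ^ (3 / 4 - (1 - ξ) / 2) * Real.exp (2 * θ ^ ((3 : ℝ) / 2) / 3))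
      atTop (nhds (Real.sqrt π / 2)) := by
  obtain ⟨hξ0, hξ1⟩ := hξ
  have hquarter : Tendsto (fun θ : ℝ => θ ^ (4⁻¹ : ℝ)) atTop atTop :=
    tendsto_rpow_atTop (by norm_num)
  have hsaddle : Tendsto
      (fun θ : ℝ => (∫ u in Ioi (0 : ℝ), saddleIntegrand ξ ((θ ^ (4⁻¹ : ℝ)) ^ 3)⁻¹ u).re)
      atTop (𝓝 (√π / 2)) := by
    have h := (continuous_re.tendsto _).comp ((tendsto_integral_saddleIntegrand hξ0.le).comp
      ((tendsto_pow_atTop three_ne_zero).comp hquarter).inv_tendsto_atTop)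
    rwa [ofReal_re] at h
  refine hsaddle.congr' ((eventually_gt_atTop 0).mono fun θ hθ => ?_)
  obtain ⟨s, hs, rfl⟩ : ∃ s > 0, θ = s ^ 4 := ⟨θ ^ (4⁻¹ : ℝ), rpow_pos_of_pos hθ _,
    by simpa using (rpow_inv_natCast_pow hθ.le four_ne_zero).symm⟩
  have hroot : (s ^ 4) ^ (4⁻¹ : ℝ) = s := by
    simpa using pow_rpow_inv_natCast hs.le four_ne_zero
  have hfactor : (s ^ 4) ^ (3 / 4 - (1 - ξ) / 2) = s ^ (1 + 2 * ξ) := by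
    rw [← rpow_natCast_mul hs.le]
    ring_nf
  have hexponent : (s ^ 4) ^ ((3 : ℝ) / 2) = s ^ 6 := by
    rw [← rpow_natCast_mul hs.le]
    norm_num
  beta_reduce
  rw [hroot, ← re_integral_airyIntegrand_rescaled hs, hfactor, hexponent,
    tendsto_nhds_unique (hLb _) (tendsto_integral_cos_mul_rpow hξ0.le hξ1 (pow_pos hs 2))]
end

section
/- The improper Riemann integral ∫₀^∞ sin(τ³/3)·τ^{−1} dτ, i.e. the limit lim_{T→∞} ∫₀^T sin(τ³/3)/τ dτ, exists and equals π/6. -/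
/-!
The substitution `u = τ³/3` turns the integral into a third of Dirichlet's integral
`∫₀^∞ sin u / u du = π/2`. For the latter, write `1/x = ∫₀^∞ e^{-xt} dt` and swap the order of
integration over `(0, T] × (0, ∞)`, which is legitimate because `∫₀^T |sin x| / x dx < ∞`. The inner
integral is elementary and gives
`∫₀^T sin x / x dx = π/2 - ∫₀^∞ e^{-Tt} (t sin T + cos T) / (1 + t²) dt`,
and the last integral is at most `2/T` in absolute value.
-/

open Real Filter MeasureTheory Set

theorem integral_Ioi_exp_neg_mul {x : ℝ} (hx : 0 < x) :
    ∫ t in Ioi 0, exp (-(x * t)) = x⁻¹ := by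
  simp_rw [← neg_mul]
  rw [integral_exp_mul_Ioi (neg_neg_iff_pos.2 hx)]
  simp

theorem integrableOn_Ioi_exp_neg_mul {x : ℝ} (hx : 0 < x) :
    IntegrableOn (fun t => exp (-(x * t))) (Ioi 0) := by
  simpa only [neg_mul] using integrableOn_exp_mul_Ioi (neg_neg_iff_pos.2 hx) 0

theorem integral_exp_neg_mul_mul_sin (t T : ℝ) :
    ∫ x in (0 : ℝ)..T, exp (-(x * t)) * sin x =
      (1 - exp (-(T * t)) * (t * sin T + cos T)) / (1 + t ^ 2) := by
  have hderiv : ∀ x, HasDerivAt (fun x => -(exp (-(x * t)) * (t * sin x + cos x)) / (1 + t ^ 2))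
      (exp (-(x * t)) * sin x) x := by
    intro x
    refine ((((hasDerivAt_id x).mul_const t).neg.exp.mul
      (((hasDerivAt_sin x).const_mul t).add (hasDerivAt_cos x))).neg.div_const
        (1 + t ^ 2)).congr_deriv ?_
    simp only [id, Pi.neg_apply, Pi.add_apply]
    field_simp
    ring
  rw [intervalIntegral.integral_eq_sub_of_hasDerivAt (fun x _ => hderiv x)
    (by apply Continuous.intervalIntegrable; fun_prop)]
  field_simp
  simp only [mul_zero, neg_zero, exp_zero, sin_zero, cos_zero, zero_add, mul_one, sub_neg_eq_add]
  ring

theorem integrable_exp_neg_mul_mul_sin_prod {T : ℝ} (hT : 0 ≤ T) :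
    Integrable (Function.uncurry fun x t => exp (-(x * t)) * sin x)
      ((volume.restrict (uIoc 0 T)).prod (volume.restrict (Ioi 0))) := by
  rw [uIoc_of_le hT]
  refine (integrable_prod_iff (Continuous.aestronglyMeasurable (by fun_prop))).2 ⟨?_, ?_⟩
  · filter_upwards [ae_restrict_mem measurableSet_Ioc] with x hx
    exact (integrableOn_Ioi_exp_neg_mul hx.1).mul_const (sin x)
  · have hnorm : ∀ x ∈ Ioc 0 T, |sinc x| = ∫ t in Ioi 0, ‖exp (-(x * t)) * sin x‖ := by
      intro x hx
      simp only [norm_mul, Real.norm_eq_abs, abs_exp]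
      rw [integral_mul_const, integral_Ioi_exp_neg_mul hx.1, sinc_of_ne_zero hx.1.ne', abs_div,
        abs_of_pos hx.1, inv_mul_eq_div]
    exact (continuous_sinc.abs.integrableOn_Icc.mono_set Ioc_subset_Icc_self).congr_fun hnorm
      measurableSet_Ioc

theorem norm_exp_neg_mul_mul_div_one_add_sq_le (T : ℝ) {t : ℝ} (ht : 0 ≤ t) :
    ‖exp (-(T * t)) * (t * sin T + cos T) / (1 + t ^ 2)‖ ≤ 2 * exp (-(T * t)) := by
  have hsum : |t * sin T + cos T| ≤ t + 1 := by
    calc |t * sin T + cos T| ≤ |t * sin T| + |cos T| := abs_add_le _ _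
      _ ≤ t * 1 + 1 := by
        rw [abs_mul, abs_of_nonneg ht]
        gcongr
        exacts [abs_sin_le_one T, abs_cos_le_one T]
      _ = t + 1 := by ring
  rw [Real.norm_eq_abs, abs_div, abs_mul, abs_exp, abs_of_pos (by positivity : (0 : ℝ) < 1 + t ^ 2),
    div_le_iff₀ (by positivity)]
  calc exp (-(T * t)) * |t * sin T + cos T| ≤ exp (-(T * t)) * (2 * (1 + t ^ 2)) := by
        gcongr
        nlinarith [sq_nonneg (t - 1)]
    _ = 2 * exp (-(T * t)) * (1 + t ^ 2) := by ring

theorem integrableOn_exp_neg_mul_mul_div_one_add_sq {T : ℝ} (hT : 0 < T) :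
    IntegrableOn (fun t => exp (-(T * t)) * (t * sin T + cos T) / (1 + t ^ 2)) (Ioi 0) :=
  ((integrableOn_Ioi_exp_neg_mul hT).const_mul 2).mono'
    ((Continuous.div (by fun_prop) (by fun_prop) fun t => by positivity).aestronglyMeasurable)
    ((ae_restrict_iff' measurableSet_Ioi).2 <| .of_forall fun _ ht =>
      norm_exp_neg_mul_mul_div_one_add_sq_le T (le_of_lt ht))

theorem norm_integral_exp_neg_mul_mul_div_one_add_sq_le {T : ℝ} (hT : 0 < T) :
    ‖∫ t in Ioi 0, exp (-(T * t)) * (t * sin T + cos T) / (1 + t ^ 2)‖ ≤ 2 * T⁻¹ := by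
  rw [← integral_Ioi_exp_neg_mul hT, ← integral_const_mul]
  exact norm_integral_le_of_norm_le ((integrableOn_Ioi_exp_neg_mul hT).const_mul 2)
    ((ae_restrict_iff' measurableSet_Ioi).2 <| .of_forall fun _ ht =>
      norm_exp_neg_mul_mul_div_one_add_sq_le T (le_of_lt ht))

theorem integral_sin_div_eq_pi_div_two_sub {T : ℝ} (hT : 0 < T) :
    ∫ x in (0 : ℝ)..T, sin x / x =
      π / 2 - ∫ t in Ioi 0, exp (-(T * t)) * (t * sin T + cos T) / (1 + t ^ 2) := by
  calc ∫ x in (0 : ℝ)..T, sin x / x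
      = ∫ x in (0 : ℝ)..T, ∫ t in Ioi 0, exp (-(x * t)) * sin x := by
        refine intervalIntegral.integral_congr_ae (.of_forall fun x hx => ?_)
        rw [uIoc_of_le hT.le] at hx
        rw [integral_mul_const, integral_Ioi_exp_neg_mul hx.1, inv_mul_eq_div]
    _ = ∫ t in Ioi 0, ∫ x in (0 : ℝ)..T, exp (-(x * t)) * sin x :=
        intervalIntegral_integral_swap (integrable_exp_neg_mul_mul_sin_prod hT.le)
    _ = ∫ t in Ioi 0,
          ((1 + t ^ 2)⁻¹ - exp (-(T * t)) * (t * sin T + cos T) / (1 + t ^ 2)) := by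
        simp_rw [integral_exp_neg_mul_mul_sin]
        congr with t
        ring
    _ = π / 2 - ∫ t in Ioi 0, exp (-(T * t)) * (t * sin T + cos T) / (1 + t ^ 2) := by
        rw [integral_sub integrable_inv_one_add_sq.integrableOn
          (integrableOn_exp_neg_mul_mul_div_one_add_sq hT), integral_Ioi_inv_one_add_sq,
          arctan_zero, sub_zero]

theorem tendsto_integral_sin_div_atTop :
    Tendsto (fun T => ∫ x in (0 : ℝ)..T, sin x / x) atTop (nhds (π / 2)) := by
  have hrem : Tendsto (fun T => ∫ t in Ioi 0, exp (-(T * t)) * (t * sin T + cos T) / (1 + t ^ 2))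
      atTop (nhds 0) := by
    refine squeeze_zero_norm' ?_ (by simpa using tendsto_inv_atTop_zero.const_mul (2 : ℝ))
    filter_upwards [eventually_gt_atTop 0] with T hT
    exact norm_integral_exp_neg_mul_mul_div_one_add_sq_le hT
  refine (by simpa using hrem.const_sub (π / 2) : Tendsto _ atTop _).congr' ?_
  filter_upwards [eventually_gt_atTop 0] with T hT
  exact (integral_sin_div_eq_pi_div_two_sub hT).symm

theorem integral_sinc (a b : ℝ) : ∫ x in a..b, sinc x = ∫ x in a..b, sin x / x :=
  intervalIntegral.integral_congr_ae <|
    (Measure.ae_ne volume 0).mono fun _ hx _ => sinc_of_ne_zero hx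

theorem integral_sin_mul_pow_div (c : ℝ) {n : ℕ} (hn : n ≠ 0) (T : ℝ) :
    ∫ τ in (0 : ℝ)..T, sin (c * τ ^ n) / τ = (∫ u in (0 : ℝ)..c * T ^ n, sin u / u) / n := by
  have hsubst := intervalIntegral.integral_comp_mul_deriv (a := 0) (b := T) (g := sinc)
    (fun x _ => (hasDerivAt_pow n x).const_mul c)
    (Continuous.continuousOn (by fun_prop)) continuous_sinc
  rw [zero_pow hn, mul_zero, integral_sinc] at hsubst
  rw [← hsubst, ← intervalIntegral.integral_div]
  refine intervalIntegral.integral_congr_ae <| (Measure.ae_ne volume 0).mono fun x hx _ => ?_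
  rcases eq_or_ne c 0 with rfl | hc
  · simp
  have hn' : (n : ℝ) ≠ 0 := Nat.cast_ne_zero.2 hn
  rw [Function.comp_apply, sinc_of_ne_zero (by positivity)]
  field_simp
  rw [mul_assoc, mul_pow_sub_one hn, mul_comm]

/-- The improper Riemann integral `∫₀^∞ sin(τ³/3)/τ dτ` exists and
equals `π/6`: `lim_{T→∞} ∫₀^T sin(τ³/3)/τ dτ = π/6`. -/
theorem integral_sin_cube_div_eq_pi_div_six :
    Tendsto (fun T : ℝ => ∫ τ in (0 : ℝ)..T, Real.sin (τ ^ 3 / 3) / τ)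
      atTop (nhds (π / 6)) := by
  have hcube : Tendsto (fun T : ℝ => 3⁻¹ * T ^ 3) atTop atTop :=
    (tendsto_pow_atTop three_ne_zero).const_mul_atTop (by norm_num)
  have hlim := (tendsto_integral_sin_div_atTop.comp hcube).div_const 3
  rw [show π / 6 = π / 2 / 3 by ring]
  simp_rw [div_eq_inv_mul (_ ^ 3), integral_sin_mul_pow_div _ three_ne_zero, Nat.cast_ofNat]
  exact hlim
end
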